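/- arXiv:0905.1343 — 7 statements merged into one kernel-verified Lean document; each statement's English description precedes it below -/
import Mathlib

section
/- For all real numbers λ with 0 < λ, the integral ∫₀^∞ (1 - cos(λu))/((e^{2πu} - 1) u) du equals λ/4 + (1/2) log((1 - e^{-λ})/λ). -/
open Real MeasureTheory
open Set Filter

lemma integ_sin_exp {b : ℝ} (hb : 0 < b) (t : ℝ) :
    IntegrableOn (fun u => Real.sin (t*u) * Real.exp (-b*u)) (Ioi 0) := by
  apply (exp_neg_integrableOn_Ioi 0 hb).mono' (Continuous.aestronglyMeasurable (by continuity))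
  filter_upwards with u
  rw [norm_mul, Real.norm_eq_abs, Real.norm_eq_abs, abs_of_pos (Real.exp_pos _)]
  nlinarith [abs_sin_le_one (t*u), Real.exp_pos (-b*u), abs_nonneg (Real.sin (t*u))]

lemma sin_exp_integral {b : ℝ} (hb : 0 < b) (t : ℝ) :
    ∫ u in Ioi (0:ℝ), Real.sin (t*u) * Real.exp (-b*u) = t / (t^2 + b^2) := by
  have hden : (0:ℝ) < t^2 + b^2 := by positivity
  have := integral_Ioi_of_hasDerivAt_of_tendsto' (a := (0:ℝ))
    (f := fun u => -Real.exp (-b*u) * (b * Real.sin (t*u) + t * Real.cos (t*u)) / (t^2+b^2))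
    (f' := fun u => Real.sin (t*u) * Real.exp (-b*u)) (m := 0) ?_ (integ_sin_exp hb t) ?_
  · rw [this]; simp; field_simp
  · intro x _
    have h1 : HasDerivAt (fun u : ℝ => Real.exp (-b*u)) (-b * Real.exp (-b*x)) x := by
      simpa [mul_comm] using ((hasDerivAt_id x).const_mul (-b)).exp
    have h2 : HasDerivAt (fun u : ℝ => Real.sin (t*u)) (t * Real.cos (t*x)) x := by
      simpa [mul_comm] using ((hasDerivAt_id x).const_mul t).sin
    have h3 : HasDerivAt (fun u : ℝ => Real.cos (t*u)) (-(t * Real.sin (t*x))) x := by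
      simpa [mul_comm] using ((hasDerivAt_id x).const_mul t).cos
    have := (((h1.neg).mul ((h2.const_mul b).add (h3.const_mul t))).div_const (t^2+b^2))
    refine this.congr_deriv ?_
    rw [div_eq_iff hden.ne']
    simp only [Pi.add_apply, Pi.neg_apply]
    ring
  · have h0 : Tendsto (fun u : ℝ => Real.exp (-b*u)) atTop (nhds 0) := by
      have hmul : Tendsto (fun u:ℝ => b*u) atTop atTop := tendsto_id.const_mul_atTop hb
      have := Real.tendsto_exp_neg_atTop_nhds_zero.comp hmul
      simpa [Function.comp_def, neg_mul] using this
    have hb1 : Tendsto (fun u : ℝ => -Real.exp (-b*u) * (b * Real.sin (t*u) + t * Real.cos (t*u))) atTop (nhds 0) := by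
      have hbd : Tendsto (fun u => (|b|+|t|) * Real.exp (-b*u)) atTop (nhds 0) := by
        simpa using h0.const_mul (|b|+|t|)
      apply squeeze_zero_norm _ hbd
      intro u
      rw [norm_mul, norm_neg, Real.norm_eq_abs, Real.norm_eq_abs, abs_of_pos (Real.exp_pos _)]
      have := abs_add_le (b * Real.sin (t*u)) (t * Real.cos (t*u))
      have e := Real.exp_pos (-b*u)
      nlinarith [abs_sin_le_one (t*u), abs_cos_le_one (t*u), abs_mul b (Real.sin (t*u)),
        abs_mul t (Real.cos (t*u)), abs_nonneg b, abs_nonneg t, abs_nonneg (Real.sin (t*u)), abs_nonneg (Real.cos (t*u)),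
        mul_le_mul_of_nonneg_left (abs_sin_le_one (t*u)) (abs_nonneg b),
        mul_le_mul_of_nonneg_left (abs_cos_le_one (t*u)) (abs_nonneg t)]
    simpa using hb1.div_const (t^2+b^2)

lemma frullani_cos {b a : ℝ} (hb : 0 < b) (ha : 0 < a) :
    ∫ u in Ioi (0:ℝ), (1 - Real.cos (a*u)) * Real.exp (-b*u) / u
      = (1/2) * Real.log ((a^2+b^2)/b^2) := by
  have hmeas : AEStronglyMeasurable (Function.uncurry fun (u t : ℝ) => Real.sin (t*u) * Real.exp (-b*u))
      ((volume.restrict (Ioi (0:ℝ))).prod (volume.restrict (Ioc 0 a))) := by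
    apply Continuous.aestronglyMeasurable
    exact (Real.continuous_sin.comp (continuous_snd.mul continuous_fst)).mul
      (Real.continuous_exp.comp (continuous_const.mul continuous_fst))
  have hint : Integrable (Function.uncurry fun (u t : ℝ) => Real.sin (t*u) * Real.exp (-b*u))
      ((volume.restrict (Ioi (0:ℝ))).prod (volume.restrict (Ioc 0 a))) := by
    have hbnd : Integrable (fun p : ℝ × ℝ => Real.exp (-b*p.1) * 1)
        ((volume.restrict (Ioi (0:ℝ))).prod (volume.restrict (Ioc 0 a))) := by
      exact Integrable.mul_prod (exp_neg_integrableOn_Ioi 0 hb) (integrable_const 1)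
    apply hbnd.mono' hmeas
    filter_upwards with p
    rw [Function.uncurry, norm_mul, Real.norm_eq_abs, Real.norm_eq_abs, abs_of_pos (Real.exp_pos _), mul_one]
    nlinarith [abs_sin_le_one (p.2*p.1), Real.exp_pos (-b*p.1), abs_nonneg (Real.sin (p.2*p.1))]
  have swap := MeasureTheory.integral_integral_swap hint
  have lhs_eq : ∀ u ∈ Ioi (0:ℝ),
      (1 - Real.cos (a*u)) * Real.exp (-b*u) / u = ∫ t in Ioc (0:ℝ) a, Real.sin (t*u) * Real.exp (-b*u) := by
    intro u hu
    have hu0 : (0:ℝ) < u := hu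
    rw [← intervalIntegral.integral_of_le ha.le, intervalIntegral.integral_mul_const,
      intervalIntegral.integral_comp_mul_right (fun x => Real.sin x) hu0.ne']
    rw [integral_sin]
    simp only [zero_mul, Real.cos_zero, smul_eq_mul]
    field_simp
  calc ∫ u in Ioi (0:ℝ), (1 - Real.cos (a*u)) * Real.exp (-b*u) / u
      = ∫ u in Ioi (0:ℝ), ∫ t in Ioc (0:ℝ) a, Real.sin (t*u) * Real.exp (-b*u) := by
        apply setIntegral_congr_fun measurableSet_Ioi lhs_eq
    _ = ∫ t in Ioc (0:ℝ) a, ∫ u in Ioi (0:ℝ), Real.sin (t*u) * Real.exp (-b*u) := swap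
    _ = ∫ t in Ioc (0:ℝ) a, t / (t^2+b^2) := by
        apply setIntegral_congr_fun measurableSet_Ioc
        intro t _
        exact sin_exp_integral hb t
    _ = (1/2) * Real.log ((a^2+b^2)/b^2) := by
        rw [← intervalIntegral.integral_of_le ha.le]
        have key : ∀ t ∈ Set.uIcc (0:ℝ) a, HasDerivAt (fun s => (1/2) * Real.log (s^2+b^2)) (t/(t^2+b^2)) t := by
          intro t _
          have h1 : HasDerivAt (fun s : ℝ => s^2+b^2) (2*t) t := by
            simpa using ((hasDerivAt_pow 2 t).add_const (b^2))
          have hpos : (0:ℝ) < t^2+b^2 := by positivity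
          have := (h1.log hpos.ne').const_mul (1/2)
          refine this.congr_deriv ?_
          ring
        rw [intervalIntegral.integral_eq_sub_of_hasDerivAt key]
        · rw [Real.log_div (by positivity) (by positivity)]
          norm_num
          ring
        · apply ContinuousOn.intervalIntegrable
          apply ContinuousOn.div continuousOn_id (by fun_prop)
          intro t _; positivity

lemma sum_log_terms {lam : ℝ} (hlam : 0 < lam) :
    HasSum (fun n : ℕ => (1/2) * Real.log ((lam^2 + (2*π*(n+1))^2)/(2*π*(n+1))^2))
      (lam/4 + (1/2) * Real.log ((1 - Real.exp (-lam))/lam)) := by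
  set x : ℝ := lam / (2*π) with hx
  have hxpos : 0 < x := by positivity
  have hterm : ∀ n : ℕ, (lam^2 + (2*π*(n+1))^2)/(2*π*(n+1))^2 = 1 + x^2/((n:ℝ)+1)^2 := by
    intro n
    have hn : (0:ℝ) < 2*π*(n+1) := by positivity
    rw [hx]
    field_simp
    ring
  -- summability
  have hsummable : Summable (fun n : ℕ => (1/2) * Real.log ((lam^2 + (2*π*(n+1))^2)/(2*π*(n+1))^2)) := by
    have hs1 : Summable (fun n : ℕ => (1/((n:ℝ)+1)^2)) := by
      exact_mod_cast (summable_nat_add_iff 1).mpr (summable_one_div_nat_pow.mpr one_lt_two)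
    have hbig : Summable (fun n : ℕ => (1/2) * (x^2/((n:ℝ)+1)^2)) := by
      have h2 := (hs1.mul_left (x^2)).mul_left (1/2 : ℝ)
      apply h2.congr
      intro n
      rw [mul_one_div]
    apply Summable.of_nonneg_of_le _ _ hbig
    · intro n
      have h1 : (1:ℝ) ≤ 1 + x^2/((n:ℝ)+1)^2 := le_add_of_nonneg_right (by positivity)
      rw [hterm n]
      have := Real.log_nonneg h1
      positivity
    · intro n
      rw [hterm n]
      have hpos : (0:ℝ) < 1 + x^2/((n:ℝ)+1)^2 := by positivity
      have := Real.log_le_sub_one_of_pos hpos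
      nlinarith
  -- limit of partial sums via Euler product
  set S : ℝ := Real.sinh (lam/2) / (lam/2) with hS
  have hSpos : 0 < S := div_pos (Real.sinh_pos_iff.mpr (by positivity)) (by positivity)
  have heuler := Complex.tendsto_euler_sin_prod (x * Complex.I)
  have hz : (π : ℂ) * (x * Complex.I) ≠ 0 := by
    apply mul_ne_zero
    · exact_mod_cast Complex.ofReal_ne_zero.mpr Real.pi_ne_zero
    · exact mul_ne_zero (Complex.ofReal_ne_zero.mpr hxpos.ne') Complex.I_ne_zero
  have hlim : Filter.Tendsto (fun n : ℕ => ∏ j ∈ Finset.range n, ((1:ℂ) - (x*Complex.I)^2/((j:ℂ)+1)^2))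
      Filter.atTop (nhds ((Complex.sin (π * (x * Complex.I))) / (π * (x*Complex.I)))) := by
    have := heuler.div_const (π * (x*Complex.I))
    apply this.congr
    intro n
    rw [mul_comm, mul_div_assoc, div_self hz, mul_one]
  have hsin : Complex.sin (π * (x * Complex.I)) / (π * (x*Complex.I)) = (S : ℂ) := by
    have hpx : (π : ℂ) * (x * Complex.I) = ((π * x : ℝ):ℂ) * Complex.I := by push_cast; ring
    rw [hpx, Complex.sin_mul_I]
    have hπx : (π * x : ℝ) = lam/2 := by
      rw [hx]; field_simp
    rw [mul_div_mul_right _ _ Complex.I_ne_zero, hπx, hS]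
    push_cast [Complex.ofReal_sinh]
    norm_num
  rw [hsin] at hlim
  -- real partial products
  have hprod_eq : ∀ n : ℕ, (((∏ j ∈ Finset.range n, ((1:ℝ) + x^2/((j:ℝ)+1)^2)) : ℝ) : ℂ)
      = ∏ j ∈ Finset.range n, ((1:ℂ) - (x*Complex.I)^2/((j:ℂ)+1)^2) := by
    intro n
    push_cast
    apply Finset.prod_congr rfl
    intro j _
    have : (x*Complex.I)^2 = -(x^2 : ℝ) := by
      push_cast
      rw [mul_pow, Complex.I_sq]
      push_cast; ring
    rw [this]
    push_cast
    ring
  have hlimR : Filter.Tendsto (fun n : ℕ => ∏ j ∈ Finset.range n, ((1:ℝ) + x^2/((j:ℝ)+1)^2))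
      Filter.atTop (nhds S) := by
    rw [← Filter.tendsto_ofReal_iff]
    exact hlim.congr (fun n => (hprod_eq n).symm) |>.congr (fun n => rfl)
  -- take logs
  have hloglim : Filter.Tendsto (fun n : ℕ => (1/2) * Real.log (∏ j ∈ Finset.range n, ((1:ℝ) + x^2/((j:ℝ)+1)^2)))
      Filter.atTop (nhds ((1/2) * Real.log S)) := by
    exact (((Real.continuousAt_log hSpos.ne').tendsto.comp hlimR).const_mul _)
  have hsum_eq : ∀ n : ℕ, ∑ j ∈ Finset.range n, (1/2) * Real.log ((lam^2 + (2*π*(j+1))^2)/(2*π*(j+1))^2)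
      = (1/2) * Real.log (∏ j ∈ Finset.range n, ((1:ℝ) + x^2/((j:ℝ)+1)^2)) := by
    intro n
    rw [Real.log_prod]
    · rw [Finset.mul_sum]
      apply Finset.sum_congr rfl
      intro j _
      rw [hterm j]
    · intro j _
      positivity
  have hpartial : Filter.Tendsto (fun n : ℕ => ∑ j ∈ Finset.range n, (1/2) * Real.log ((lam^2 + (2*π*(j+1))^2)/(2*π*(j+1))^2))
      Filter.atTop (nhds ((1/2) * Real.log S)) := by
    exact hloglim.congr (fun n => (hsum_eq n).symm)
  have htsum := hsummable.hasSum
  have := htsum.tendsto_sum_nat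
  have hval : (1/2) * Real.log S = lam/4 + (1/2) * Real.log ((1 - Real.exp (-lam))/lam) := by
    have hSe : S = Real.exp (lam/2) * ((1 - Real.exp (-lam))/lam) := by
      rw [hS, Real.sinh_eq]
      rw [show -(lam/2) = lam/2 + (-lam) by ring, Real.exp_add]
      field_simp
    rw [hSe, Real.log_mul (Real.exp_pos _).ne' ?_, Real.log_exp]
    · ring
    · have h1 : Real.exp (-lam) < 1 := Real.exp_lt_one_iff.mpr (by linarith)
      exact (div_pos (by linarith) hlam).ne'
  have huniq := tendsto_nhds_unique this hpartial
  rw [huniq] at htsum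
  rwa [hval] at htsum

lemma one_sub_cos_le_abs (y : ℝ) : 1 - Real.cos y ≤ |y| := by
  have h1 : Real.sin (y/2) ^ 2 = 1/2 - Real.cos (2*(y/2))/2 := Real.sin_sq_eq_half_sub (y/2)
  rw [show 2*(y/2) = y by ring] at h1
  have h2 : |Real.sin (y/2)| ≤ |y/2| := Real.abs_sin_le_abs
  have h3 : |Real.sin (y/2)| ≤ 1 := Real.abs_sin_le_one (y/2)
  have h4 : |y/2| = |y|/2 := by rw [abs_div]; norm_num
  nlinarith [sq_abs (Real.sin (y/2)), abs_nonneg (Real.sin (y/2))]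

theorem stmt_1 (lam : ℝ) (hlam : 0 < lam) :
    ∫ u in Set.Ioi (0:ℝ), (1 - Real.cos (lam * u)) / ((Real.exp (2 * π * u) - 1) * u) =
      lam / 4 + (1/2) * Real.log ((1 - Real.exp (-lam)) / lam) := by
  set F : ℕ → ℝ → ℝ := fun n u => (1 - Real.cos (lam*u)) * Real.exp (-(2*π*((n:ℝ)+1))*u) / u with hF
  have hc : ∀ n : ℕ, (0:ℝ) < 2*π*((n:ℝ)+1) := fun n => by positivity
  -- integrability
  have hmeas : ∀ n : ℕ, AEStronglyMeasurable (F n) (volume.restrict (Ioi (0:ℝ))) := by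
    intro n
    apply ContinuousOn.aestronglyMeasurable _ measurableSet_Ioi
    apply ContinuousOn.div (by fun_prop) continuousOn_id
    intro u hu; exact ne_of_gt hu
  have hbound : ∀ n : ℕ, ∀ u ∈ Ioi (0:ℝ), ‖F n u‖ ≤ lam * Real.exp (-(2*π*((n:ℝ)+1))*u) := by
    intro n u hu
    have hu0 : (0:ℝ) < u := hu
    have h1 : 0 ≤ 1 - Real.cos (lam*u) := by nlinarith [Real.cos_le_one (lam*u)]
    have h2 : 1 - Real.cos (lam*u) ≤ lam*u := by
      have := one_sub_cos_le_abs (lam*u)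
      rwa [abs_of_pos (by positivity)] at this
    rw [hF, Real.norm_eq_abs, abs_div, abs_of_pos hu0, abs_of_nonneg (by positivity : (0:ℝ) ≤ (1 - Real.cos (lam*u)) * Real.exp _)]
    rw [div_le_iff₀ hu0]
    have e := Real.exp_pos (-(2*π*((n:ℝ)+1))*u)
    nlinarith
  have hF_int : ∀ n : ℕ, Integrable (F n) (volume.restrict (Ioi (0:ℝ))) := by
    intro n
    apply Integrable.mono' ((exp_neg_integrableOn_Ioi 0 (hc n)).const_mul lam) (hmeas n)
    rw [ae_restrict_iff' measurableSet_Ioi]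
    filter_upwards with u hu
    exact hbound n u hu
  -- values of the integrals
  have hval : ∀ n : ℕ, ∫ u in Ioi (0:ℝ), F n u
      = (1/2) * Real.log ((lam^2 + (2*π*((n:ℝ)+1))^2)/(2*π*((n:ℝ)+1))^2) :=
    fun n => frullani_cos (hc n) hlam
  have hsum := sum_log_terms hlam
  have hsummable := hsum.summable
  have hnorm : ∀ n : ℕ, ∫ u in Ioi (0:ℝ), ‖F n u‖ = ∫ u in Ioi (0:ℝ), F n u := by
    intro n
    apply setIntegral_congr_fun measurableSet_Ioi
    intro u hu
    have hu0 : (0:ℝ) < u := hu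
    have h1 : 0 ≤ 1 - Real.cos (lam*u) := by nlinarith [Real.cos_le_one (lam*u)]
    show ‖F n u‖ = F n u
    exact Real.norm_of_nonneg (div_nonneg (mul_nonneg h1 (Real.exp_pos _).le) hu0.le)
  have hF_sum : Summable (fun n : ℕ => ∫ u in Ioi (0:ℝ), ‖F n u‖) := by
    apply hsummable.congr
    intro n
    rw [hnorm n, hval n]
  have hswap := MeasureTheory.integral_tsum_of_summable_integral_norm hF_int hF_sum
  -- pointwise identity
  have hpt : ∀ u ∈ Ioi (0:ℝ), (∑' n : ℕ, F n u)
      = (1 - Real.cos (lam * u)) / ((Real.exp (2 * π * u) - 1) * u) := by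
    intro u hu
    have hu0 : (0:ℝ) < u := hu
    set r : ℝ := Real.exp (-(2*π*u)) with hr
    have hr0 : 0 < r := Real.exp_pos _
    have hr1 : r < 1 := Real.exp_lt_one_iff.mpr (neg_lt_zero.mpr (by positivity))
    have hexp : ∀ n : ℕ, Real.exp (-(2*π*((n:ℝ)+1))*u) = r^(n+1) := by
      intro n
      rw [hr, ← Real.exp_nat_mul]
      congr 1
      push_cast
      ring
    have he : Real.exp (2*π*u) = r⁻¹ := by
      rw [hr, ← Real.exp_neg, neg_neg]
    have step1 : (∑' n : ℕ, F n u) = ∑' n : ℕ, ((1 - Real.cos (lam*u))/u * r) * r^n := by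
      apply tsum_congr
      intro n
      rw [hF]
      simp only []
      rw [hexp n, pow_succ]
      field_simp
    rw [step1, tsum_mul_left, tsum_geometric_of_lt_one hr0.le hr1, he]
    have h1r : 1 - r ≠ 0 := by linarith
    field_simp
    try ring
    try exact Or.inl trivial
  calc ∫ u in Ioi (0:ℝ), (1 - Real.cos (lam * u)) / ((Real.exp (2 * π * u) - 1) * u)
      = ∫ u in Ioi (0:ℝ), ∑' n : ℕ, F n u :=
        setIntegral_congr_fun measurableSet_Ioi (fun u hu => (hpt u hu).symm)
    _ = ∑' n : ℕ, ∫ u in Ioi (0:ℝ), F n u := hswap.symm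
    _ = ∑' n : ℕ, (1/2) * Real.log ((lam^2 + (2*π*((n:ℝ)+1))^2)/(2*π*((n:ℝ)+1))^2) := tsum_congr hval
    _ = lam / 4 + (1/2) * Real.log ((1 - Real.exp (-lam)) / lam) := hsum.tsum_eq
end

section
/- For every positive integer m, ∫₀^∞ t^{2m-1}/(e^{2πt} - 1) dt = (-1)^{m-1} B_{2m}/(4m), where B_{2m} denotes the 2m-th Bernoulli number. -/
open Real MeasureTheory
open scoped Nat

theorem stmt_3 (m : ℕ) (hm : 0 < m) :
    ∫ t in Set.Ioi (0:ℝ), t ^ (2 * m - 1) / (Real.exp (2 * π * t) - 1) =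
      (-1) ^ (m - 1) * ((bernoulli (2 * m) : ℝ)) / (4 * m) := by
  obtain ⟨j, rfl⟩ : ∃ j, m = j + 1 := ⟨m - 1, by omega⟩
  have hπ : 0 < π := Real.pi_pos
  set k : ℕ := 2 * j + 1 with hk
  have hk1 : 2 * (j + 1) - 1 = k := by omega
  rw [hk1]
  set F : ℕ → ℝ → ℝ := fun n t => t ^ k * Real.exp (-(2 * π * (n + 1) * t)) with hFdef
  have hc : ∀ n : ℕ, (0:ℝ) < 2 * π * (n + 1) := fun n => by positivity
  have hcast : ((k : ℝ)) = (2 * ((j:ℝ)+1)) - 1 := by push_cast [hk]; ring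
  have hpow : ∀ t : ℝ, t ∈ Set.Ioi (0:ℝ) →
      t ^ ((2 * ((j:ℝ)+1)) - 1) = t ^ k := by
    intro t ht
    rw [← hcast, Real.rpow_natCast]
  -- integrability of each term
  have hFi : ∀ n, IntegrableOn (F n) (Set.Ioi 0) := by
    intro n
    have h := integrableOn_rpow_mul_exp_neg_mul_rpow
      (s := (2 * ((j:ℝ)+1)) - 1) (p := 1) (b := 2 * π * (n + 1))
      (by push_cast; nlinarith [hπ]) one_pos (hc n)
    refine h.congr_fun (fun t ht => ?_) measurableSet_Ioi
    beta_reduce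
    rw [hpow t ht, Real.rpow_one, neg_mul]
  -- value of each integral
  have hval : ∀ n, ∫ t in Set.Ioi 0, F n t
      = (1 / (2 * π * (n + 1))) ^ (2 * ((j:ℝ) + 1)) * Real.Gamma (2 * ((j:ℝ)+1)) := by
    intro n
    have h := integral_rpow_mul_exp_neg_mul_Ioi
      (a := (2 * ((j:ℝ)+1))) (r := 2 * π * (n + 1)) (by positivity) (hc n)
    rw [← h]
    refine setIntegral_congr_fun measurableSet_Ioi (fun t ht => ?_)
    rw [hpow t ht]
  -- pointwise has-sum of the geometric series
  have hsum : ∀ t ∈ Set.Ioi (0:ℝ), HasSum (fun n => F n t)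
      (t ^ k / (Real.exp (2 * π * t) - 1)) := by
    intro t ht
    rw [Set.mem_Ioi] at ht
    set r : ℝ := Real.exp (-(2 * π * t)) with hr
    have hr0 : 0 < r := Real.exp_pos _
    have hr1 : r < 1 := Real.exp_lt_one_iff.mpr (by nlinarith [hπ])
    have hE : 1 < Real.exp (2 * π * t) := by
      rw [← Real.exp_zero]
      exact Real.exp_lt_exp.mpr (by nlinarith [hπ])
    have hg := (hasSum_geometric_of_lt_one hr0.le hr1).mul_left (t ^ k * r)
    have hfun : (fun n : ℕ => t ^ k * r * r ^ n) = fun n => F n t := by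
      funext n
      have hrn : r ^ (n : ℕ) = Real.exp (-(2 * π * (n : ℕ) * t)) := by
        rw [hr, ← Real.exp_nat_mul]; ring_nf
      simp only [hFdef, hrn, hr]
      rw [mul_assoc]
      congr 1
      rw [← Real.exp_nat_mul, ← Real.exp_add]
      congr 1
      push_cast; ring
    rw [hfun] at hg
    suffices h : t ^ k / (Real.exp (2 * π * t) - 1) = t ^ k * r * (1 - r)⁻¹ by rw [h]; exact hg
    rw [hr, Real.exp_neg]
    have hEne : Real.exp (2 * π * t) ≠ 0 := (Real.exp_pos _).ne'
    have hE1 : Real.exp (2 * π * t) - 1 ≠ 0 := by nlinarith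
    have h1r : 1 - (Real.exp (2 * π * t))⁻¹ ≠ 0 := by
      have : (Real.exp (2 * π * t))⁻¹ < 1 := by
        rw [inv_lt_one_iff₀]; right; exact hE
      nlinarith
    field_simp
  -- nonnegativity: integral of norm equals integral
  have hnormval : ∀ n, ∫ t in Set.Ioi 0, ‖F n t‖ = ∫ t in Set.Ioi 0, F n t := by
    intro n
    refine setIntegral_congr_fun measurableSet_Ioi (fun t ht => ?_)
    rw [Set.mem_Ioi] at ht
    exact Real.norm_of_nonneg (by positivity)
  -- terms of the series of integrals
  have hterm : ∀ n : ℕ, ∫ t in Set.Ioi 0, F n t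
      = Real.Gamma (2 * ((j:ℝ)+1)) * (1 / (2 * π)) ^ (2 * (j+1))
          * (1 / ((n:ℝ) + 1) ^ (2 * (j+1))) := by
    intro n
    have hx : (1 / (2 * π * ((n:ℝ) + 1))) ^ (2 * ((j:ℝ) + 1))
        = (1 / (2 * π)) ^ (2 * (j+1)) * (1 / ((n:ℝ) + 1) ^ (2 * (j+1))) := by
      rw [show (2 * ((j:ℝ) + 1)) = ((2 * (j+1) : ℕ) : ℝ) by push_cast; ring,
        Real.rpow_natCast,
        show (1:ℝ) / (2 * π * ((n:ℝ) + 1)) = (1/(2*π)) * (1/((n:ℝ)+1)) by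
          rw [div_mul_div_comm, one_mul],
        mul_pow, div_pow, one_pow, div_pow, one_pow]
    rw [hval n, hx]
    ring
  have hsummable : Summable fun n : ℕ => ∫ t in Set.Ioi 0, ‖F n t‖ := by
    simp only [hnormval]
    simp only [hterm]
    apply Summable.mul_left
    have h2 : Summable (fun n : ℕ => 1 / ((n:ℝ)) ^ (2 * (j+1))) :=
      summable_one_div_nat_pow.mpr (by omega)
    have := (summable_nat_add_iff 1).mpr h2
    simpa using this
  -- interchange sum and integral
  have hkey := MeasureTheory.hasSum_integral_of_summable_integral_norm
    (μ := volume.restrict (Set.Ioi 0)) (F := F) hFi hsummable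
  have hint_eq : ∫ t in Set.Ioi 0, (∑' n, F n t)
      = ∫ t in Set.Ioi (0:ℝ), t ^ k / (Real.exp (2 * π * t) - 1) := by
    refine setIntegral_congr_fun measurableSet_Ioi (fun t ht => ?_)
    exact (hsum t ht).tsum_eq
  rw [hint_eq] at hkey
  -- compare with the zeta value
  have hz := hasSum_zeta_nat (k := j + 1) (by omega)
  have hz' : HasSum (fun n : ℕ => 1 / ((n:ℝ) + 1) ^ (2 * (j+1)))
      ((-1 : ℝ) ^ (j + 1 + 1) * (2 : ℝ) ^ (2 * (j+1) - 1) * π ^ (2 * (j+1)) *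
        bernoulli (2 * (j+1)) / (2 * (j+1))!) := by
    have h := (hasSum_nat_add_iff'
      (f := fun n : ℕ => 1 / ((n:ℝ)) ^ (2 * (j+1))) 1).mpr hz
    simp only [Finset.sum_range_one, Nat.cast_zero, Nat.cast_add, Nat.cast_one] at h
    rw [zero_pow (by omega), div_zero, sub_zero] at h
    exact h
  have hz'' := hz'.mul_left (Real.Gamma (2 * ((j:ℝ)+1)) * (1 / (2 * π)) ^ (2 * (j+1)))
  simp only [hterm] at hkey
  have hfinal : (∫ t in Set.Ioi (0:ℝ), t ^ k / (Real.exp (2 * π * t) - 1))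
      = Real.Gamma (2 * ((j:ℝ)+1)) * (1 / (2 * π)) ^ (2 * (j+1)) *
        ((-1 : ℝ) ^ (j + 1 + 1) * (2 : ℝ) ^ (2 * (j+1) - 1) * π ^ (2 * (j+1)) *
          bernoulli (2 * (j+1)) / (2 * (j+1))!) := by
    exact hkey.unique hz''
  rw [hfinal]
  -- now pure arithmetic
  have hGamma : Real.Gamma (2 * ((j:ℝ)+1)) = ((2 * j + 1)! : ℝ) := by
    rw [show (2 * ((j:ℝ)+1)) = ((2 * j + 1 : ℕ) : ℝ) + 1 by push_cast; ring]
    exact Real.Gamma_nat_eq_factorial (2 * j + 1)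
  have hfacts : ((2 * (j+1))! : ℝ) = (2 * ((j:ℝ) + 1)) * ((2 * j + 1)! : ℝ) := by
    rw [show 2 * (j + 1) = (2 * j + 1) + 1 by ring, Nat.factorial_succ]
    push_cast; ring
  have h2pow : (2 : ℝ) ^ (2 * (j+1) - 1) * 2 = 2 ^ (2 * (j+1)) := by
    rw [show 2 * (j + 1) - 1 = 2 * j + 1 from by omega,
      show 2 * (j + 1) = 2 * j + 1 + 1 from by omega]
    ring
  have hneg : ((-1 : ℝ)) ^ (j + 1 + 1) = (-1) ^ j := by
    simp [pow_succ]
  rw [hGamma, hfacts, hneg, show j + 1 - 1 = j from rfl]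
  have hfacne : ((2 * j + 1)! : ℝ) ≠ 0 := by positivity
  have hpine : (π : ℝ) ^ (2 * (j+1)) ≠ 0 := by positivity
  rw [show (2:ℝ) ^ (2 * (j+1) - 1) = 2 ^ (2 * (j+1)) / 2 by
    rw [← h2pow]; ring]
  rw [div_pow, one_pow, mul_pow]
  have h2ne : ((2:ℝ)) ^ (2 * (j+1)) ≠ 0 := by positivity
  field_simp
  push_cast; ring
end

section
/- For all real t with t ∉ 2πℤ, cot(t/2) = 2/t - Σ_{n=1}^∞ 4t/(4π²n² - t²), the series converging absolutely. -/
open Real Filter Topology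

-- each Euler factor is nonzero at a non-integer point
lemma factor_ne (y : ℝ) (hy : ∀ k : ℤ, y ≠ k) (j : ℕ) :
    (1 : ℝ) - y ^ 2 / ((j : ℝ) + 1) ^ 2 ≠ 0 := by
  have hj : ((j : ℝ) + 1) ≠ 0 := by positivity
  intro h
  have h2 : y ^ 2 = ((j : ℝ) + 1) ^ 2 := by field_simp at h; linarith
  have h3 : (y - ((j:ℝ)+1)) * (y + ((j:ℝ)+1)) = 0 := by ring_nf; nlinarith [h2]
  rcases mul_eq_zero.mp h3 with h | h
  · exact hy (j + 1) (by push_cast; linarith)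
  · exact hy (-(j + 1)) (by push_cast; linarith)

lemma base_summable : Summable (fun n : ℕ => 1 / ((n : ℝ) + 1) ^ 2) := by
  have h := Real.summable_one_div_nat_pow.mpr (by norm_num : 1 < 2)
  have h2 := (summable_nat_add_iff 1).mpr h
  refine h2.congr fun n => ?_
  push_cast
  ring

lemma abs_log_one_sub_le {u : ℝ} (h0 : 0 ≤ u) (h1 : u ≤ 1/2) :
    |Real.log (1 - u)| ≤ 2 * u := by
  have hpos : 0 < 1 - u := by linarith
  have h2 : Real.log (1 - u) ≤ 0 := Real.log_nonpos (by linarith) (by linarith)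
  rw [abs_of_nonpos h2, ← Real.log_inv]
  have h4 := Real.log_le_sub_one_of_pos (inv_pos.mpr hpos)
  have h5 : (1 - u)⁻¹ - 1 ≤ 2 * u := by
    rw [inv_eq_one_div]
    have he : 1/(1-u) - 1 = u / (1-u) := by field_simp; ring
    rw [he, div_le_iff₀ hpos]
    nlinarith
  linarith

-- summability of the log series
lemma log_summable (y : ℝ) :
    Summable (fun n : ℕ => Real.log (1 - y ^ 2 / ((n : ℝ) + 1) ^ 2)) := by
  have hsum : Summable (fun n : ℕ => 2 * y ^ 2 * (1 / ((n : ℝ) + 1) ^ 2)) :=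
    base_summable.mul_left _
  apply Summable.of_norm_bounded_eventually_nat hsum
  filter_upwards [eventually_ge_atTop ⌈2 * y ^ 2⌉₊] with n hn
  have hn' : 2 * y ^ 2 ≤ (n : ℝ) + 1 := by
    calc 2 * y ^ 2 ≤ (⌈2 * y ^ 2⌉₊ : ℝ) := Nat.le_ceil _
    _ ≤ (n : ℝ) := by exact_mod_cast hn
    _ ≤ (n : ℝ) + 1 := by linarith
  have hn0 : (0:ℝ) ≤ (n : ℝ) := n.cast_nonneg
  have hb : (n : ℝ) + 1 ≤ ((n : ℝ) + 1) ^ 2 := by nlinarith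
  have hu0 : 0 ≤ y ^ 2 / ((n : ℝ) + 1) ^ 2 := by positivity
  have hu1 : y ^ 2 / ((n : ℝ) + 1) ^ 2 ≤ 1 / 2 := by
    rw [div_le_div_iff₀ (by positivity) (by norm_num)]
    nlinarith
  calc ‖Real.log (1 - y ^ 2 / ((n : ℝ) + 1) ^ 2)‖
      = |Real.log (1 - y ^ 2 / ((n : ℝ) + 1) ^ 2)| := rfl
    _ ≤ 2 * (y ^ 2 / ((n : ℝ) + 1) ^ 2) := abs_log_one_sub_le hu0 hu1
    _ = 2 * y ^ 2 * (1 / ((n : ℝ) + 1) ^ 2) := by ring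

-- the log of the Euler product (HasSum form)
lemma log_hasSum (y : ℝ) (hy : ∀ k : ℤ, y ≠ k) :
    HasSum (fun n : ℕ => Real.log (1 - y ^ 2 / ((n : ℝ) + 1) ^ 2))
      (Real.log (Real.sin (π * y)) - Real.log (π * y)) := by
  have hy0 : y ≠ 0 := fun h => hy 0 (by simpa using h)
  have hpy : π * y ≠ 0 := mul_ne_zero Real.pi_ne_zero hy0
  have hsin : Real.sin (π * y) ≠ 0 := by
    rw [Real.sin_ne_zero_iff]
    intro n hn
    apply hy n
    have : π * (n:ℝ) = π * y := by linarith [hn]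
    exact (mul_left_cancel₀ Real.pi_ne_zero this).symm
  have htend := Real.tendsto_euler_sin_prod y
  have hlog := (Real.continuousAt_log hsin).tendsto.comp htend
  have heq : ∀ N : ℕ, Real.log (π * y * ∏ j ∈ Finset.range N, (1 - y^2/((j:ℝ)+1)^2))
      = Real.log (π * y) + ∑ j ∈ Finset.range N, Real.log (1 - y^2/((j:ℝ)+1)^2) := by
    intro N
    rw [Real.log_mul hpy (Finset.prod_ne_zero_iff.mpr fun j _ => factor_ne y hy j),
        Real.log_prod fun j _ => factor_ne y hy j]
  have h2 : Tendsto (fun N : ℕ => ∑ j ∈ Finset.range N, Real.log (1 - y^2/((j:ℝ)+1)^2)) atTop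
      (𝓝 (Real.log (Real.sin (π*y)) - Real.log (π*y))) := by
    have h3 : Tendsto (fun N : ℕ => Real.log (π * y) +
        ∑ j ∈ Finset.range N, Real.log (1 - y^2/((j:ℝ)+1)^2)) atTop
        (𝓝 (Real.log (Real.sin (π*y)))) := by
      refine hlog.congr fun N => heq N
    have h4 := h3.sub_const (Real.log (π*y))
    refine h4.congr fun N => by ring
  have hs := (log_summable y).hasSum
  have h5 := hs.tendsto_sum_nat
  have h6 := tendsto_nhds_unique h5 h2
  exact h6 ▸ hs

set_option maxHeartbeats 1000000 in
lemma cot_series (x : ℝ) (hx : ∀ k : ℤ, x ≠ k) :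
    π * Real.cos (π * x) / Real.sin (π * x) =
      1 / x + ∑' n : ℕ, -(2 * x) / (((n : ℝ) + 1) ^ 2 - x ^ 2) := by
  have hm1 : ((⌊x⌋ : ℝ)) < x := lt_of_le_of_ne (Int.floor_le x) (fun h => hx ⌊x⌋ h.symm)
  have hm2 : x < (⌊x⌋ : ℝ) + 1 := Int.lt_floor_add_one x
  set m : ℝ := (⌊x⌋ : ℝ) with hm
  set ε : ℝ := min (x - m) (m + 1 - x) / 2 with hεdef
  have hε : 0 < ε := by
    have := lt_min (by linarith : (0:ℝ) < x - m) (by linarith : (0:ℝ) < m + 1 - x)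
    positivity
  have hε1 : ε ≤ (x - m) / 2 := by
    have := min_le_left (x - m) (m + 1 - x); rw [hεdef]; linarith
  have hε2 : ε ≤ (m + 1 - x) / 2 := by
    have := min_le_right (x - m) (m + 1 - x); rw [hεdef]; linarith
  have hεhalf : ε ≤ 1 / 2 := by linarith
  set T : Set ℝ := Set.Ioo (m + ε) (m + 1 - ε) with hT
  have hxT : x ∈ T := ⟨by linarith, by linarith⟩
  -- distance from points of T to every integer is at least ε
  have key : ∀ y ∈ T, ∀ k : ℤ, ε ≤ |y - k| := by
    rintro y ⟨hy1, hy2⟩ k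
    rcases le_or_gt (k : ℝ) m with h | h
    · rw [abs_of_pos (by linarith)]; linarith
    · have hk : m + 1 ≤ (k : ℝ) := by
        rw [hm]
        exact_mod_cast Int.add_one_le_iff.mpr (by exact_mod_cast (hm ▸ h : (⌊x⌋:ℝ) < k))
      rw [abs_of_neg (by linarith)]; linarith
  have hyne : ∀ y ∈ T, ∀ k : ℤ, y ≠ (k : ℝ) := by
    intro y hy k h
    have := key y hy k
    rw [h, sub_self, abs_zero] at this
    linarith
  set B : ℝ := |m| + 1 with hB
  have hB0 : 0 < B := by positivity
  have hyB : ∀ y ∈ T, |y| ≤ B := by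
    rintro y ⟨hy1, hy2⟩
    rw [abs_le]
    constructor
    · have := neg_abs_le m; linarith
    · have := le_abs_self m; linarith
  set C : ℝ := 2 * B * (2 * B + 2) ^ 2 / ε ^ 2 with hC
  set u : ℕ → ℝ := fun n => C * (1 / ((n : ℝ) + 1) ^ 2) with hu
  have husum : Summable u := base_summable.mul_left C
  set g : ℕ → ℝ → ℝ := fun n y => Real.log (1 - y ^ 2 / ((n : ℝ) + 1) ^ 2) with hg
  set g' : ℕ → ℝ → ℝ := fun n y => -(2 * y) / (((n : ℝ) + 1) ^ 2 - y ^ 2) with hg'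
  have hder : ∀ (n : ℕ), ∀ y ∈ T, HasDerivAt (g n) (g' n y) y := by
    intro n y hy
    have hn : (0:ℝ) < ((n : ℝ) + 1) ^ 2 := by positivity
    have h1 : HasDerivAt (fun z : ℝ => 1 - z ^ 2 / ((n : ℝ) + 1) ^ 2)
        (-(2 * y) / ((n : ℝ) + 1) ^ 2) y := by
      have := ((hasDerivAt_pow 2 y).div_const (((n : ℝ) + 1) ^ 2)).neg.const_add 1
      convert this using 1
      · rfl
      · rfl
      · funext z; simp only [Pi.neg_apply]; ring
      · simp
        ring
    have hne := factor_ne y (hyne y hy) n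
    have h2 := h1.log hne
    have hn0 : (((n : ℝ) + 1) ^ 2) ≠ 0 := ne_of_gt hn
    have halg : -(2 * y) / (((n : ℝ) + 1) ^ 2 - y ^ 2)
        = -(2 * y) / ((n : ℝ) + 1) ^ 2 / (1 - y ^ 2 / ((n : ℝ) + 1) ^ 2) := by
      rw [div_div]
      congr 1
      field_simp
    show HasDerivAt (fun z : ℝ => Real.log (1 - z ^ 2 / ((n : ℝ) + 1) ^ 2))
        (-(2 * y) / (((n : ℝ) + 1) ^ 2 - y ^ 2)) y
    rw [halg]
    exact h2
  have hbound : ∀ (n : ℕ), ∀ y ∈ T, ‖g' n y‖ ≤ u n := by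
    intro n y hy
    have hyBy := hyB y hy
    have hyabs : 0 ≤ |y| := abs_nonneg y
    have h1 : ε ≤ |((n : ℝ) + 1) - y| := by
      have := key y hy ((n : ℕ) + 1)
      rw [abs_sub_comm] at this
      convert this using 2
      push_cast; ring
    have h2 : ε ≤ |((n : ℝ) + 1) + y| := by
      have := key y hy (-((n : ℕ) + 1))
      convert this using 2
      push_cast; ring
    have hDfact : |(((n : ℝ) + 1) ^ 2 - y ^ 2)| = |((n : ℝ) + 1) - y| * |((n : ℝ) + 1) + y| := by
      rw [← abs_mul]; ring_nf
    have hn1 : (1:ℝ) ≤ (n : ℝ) + 1 := by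
      have : (0:ℝ) ≤ (n:ℝ) := n.cast_nonneg; linarith
    have hD : ε ^ 2 / (2 * B + 2) ^ 2 * ((n : ℝ) + 1) ^ 2 ≤ |(((n : ℝ) + 1) ^ 2 - y ^ 2)| := by
      rcases le_or_gt ((n : ℝ) + 1) (2 * B + 2) with h | h
      · have hεD : ε ^ 2 ≤ |(((n : ℝ) + 1) ^ 2 - y ^ 2)| := by
          rw [hDfact]
          nlinarith [abs_nonneg (((n : ℝ) + 1) - y), abs_nonneg (((n : ℝ) + 1) + y)]
        have hsq : ((n:ℝ) + 1) ^ 2 ≤ (2 * B + 2) ^ 2 := by nlinarith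
        have : ε ^ 2 / (2 * B + 2) ^ 2 * ((n : ℝ) + 1) ^ 2 ≤ ε ^ 2 := by
          rw [div_mul_eq_mul_div, div_le_iff₀ (by positivity)]
          exact mul_le_mul_of_nonneg_left hsq (sq_nonneg ε)
        linarith
      · have hyn : |y| ≤ ((n : ℝ) + 1) / 2 := by linarith
        have hpos : (0:ℝ) < ((n : ℝ) + 1) ^ 2 - y ^ 2 := by
          nlinarith [sq_abs y, neg_abs_le y, le_abs_self y]
        rw [abs_of_pos hpos]
        have hy2 : y ^ 2 ≤ ((n : ℝ) + 1) ^ 2 / 4 := by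
          nlinarith [sq_abs y]
        have hεB : ε ^ 2 / (2 * B + 2) ^ 2 ≤ 1 / 16 := by
          rw [div_le_iff₀ (by positivity)]
          nlinarith [sq_nonneg ε, sq_nonneg B]
        nlinarith [sq_nonneg ((n:ℝ)+1)]
    have hDpos : 0 < |(((n : ℝ) + 1) ^ 2 - y ^ 2)| := by
      have : 0 < ε ^ 2 / (2 * B + 2) ^ 2 * ((n : ℝ) + 1) ^ 2 := by positivity
      linarith
    rw [hg']
    have hnorm : ‖-(2 * y) / (((n : ℝ) + 1) ^ 2 - y ^ 2)‖
        = 2 * |y| / |(((n : ℝ) + 1) ^ 2 - y ^ 2)| := by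
      rw [Real.norm_eq_abs, abs_div, abs_neg, abs_mul, abs_two]
    rw [hnorm, hu, hC]
    rw [div_le_iff₀ hDpos]
    have hrhs : 2 * B * (2 * B + 2) ^ 2 / ε ^ 2 * (1 / ((n : ℝ) + 1) ^ 2) *
        (ε ^ 2 / (2 * B + 2) ^ 2 * ((n : ℝ) + 1) ^ 2) = 2 * B := by
      field_simp
    calc 2 * |y| ≤ 2 * B := by linarith
      _ = 2 * B * (2 * B + 2) ^ 2 / ε ^ 2 * (1 / ((n : ℝ) + 1) ^ 2) *
          (ε ^ 2 / (2 * B + 2) ^ 2 * ((n : ℝ) + 1) ^ 2) := hrhs.symm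
      _ ≤ _ := by
        apply mul_le_mul_of_nonneg_left hD
        positivity
  have hsum0 : Summable fun n => g n x := log_summable x
  have hT_open : IsOpen T := isOpen_Ioo
  have hT_pre : IsPreconnected T := isPreconnected_Ioo
  have hderiv_tsum : HasDerivAt (fun z => ∑' n, g n z) (∑' n, g' n x) x :=
    hasDerivAt_tsum_of_isPreconnected husum hT_open hT_pre hder hbound hxT hsum0 hxT
  have hx0 : x ≠ 0 := fun h => hx 0 (by simpa using h)
  have hpx : π * x ≠ 0 := mul_ne_zero Real.pi_ne_zero hx0
  have hsin : Real.sin (π * x) ≠ 0 := by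
    rw [Real.sin_ne_zero_iff]
    intro n hn
    apply hx n
    have : π * (n:ℝ) = π * x := by linarith [hn]
    exact (mul_left_cancel₀ Real.pi_ne_zero this).symm
  have hlog1 : HasDerivAt (fun y : ℝ => Real.log (π * y)) (1 / x) x := by
    have h1 : HasDerivAt (fun y : ℝ => π * y) π x := by
      simpa using (hasDerivAt_id x).const_mul π
    have h2 := h1.log hpx
    convert h2 using 1
    field_simp
  have hG : HasDerivAt (fun y => Real.log (π * y) + ∑' n, g n y)
      (1 / x + ∑' n, g' n x) x := hlog1.add hderiv_tsum
  have hF : HasDerivAt (fun y : ℝ => Real.log (Real.sin (π * y)))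
      (π * Real.cos (π * x) / Real.sin (π * x)) x := by
    have h1 : HasDerivAt (fun y : ℝ => π * y) π x := by
      simpa using (hasDerivAt_id x).const_mul π
    have h2 : HasDerivAt (fun y : ℝ => Real.sin (π * y)) (Real.cos (π * x) * π) x :=
      (Real.hasDerivAt_sin (π * x)).comp x h1
    have h3 := h2.log hsin
    convert h3 using 1
    ring
  have hFG : ∀ y ∈ T, Real.log (Real.sin (π * y)) = Real.log (π * y) + ∑' n, g n y := by
    intro y hy
    have := (log_hasSum y (hyne y hy)).tsum_eq
    rw [hg, this]
    ring
  have hGev : (fun y => Real.log (π * y) + ∑' n, g n y)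
      =ᶠ[nhds x] (fun y : ℝ => Real.log (Real.sin (π * y))) := by
    filter_upwards [hT_open.mem_nhds hxT] with y hy
    exact (hFG y hy).symm
  have hG2 : HasDerivAt (fun y => Real.log (π * y) + ∑' n, g n y)
      (π * Real.cos (π * x) / Real.sin (π * x)) x :=
    hF.congr_of_eventuallyEq hGev
  exact hG2.unique hG

lemma final_summable (t : ℝ) :
    Summable (fun n : ℕ => |4 * t / (4 * π ^ 2 * ((n : ℝ) + 1) ^ 2 - t ^ 2)|) := by
  have hπ := Real.pi_pos
  apply Summable.of_norm_bounded_eventually_nat (g := fun n => (2 * |t| / π ^ 2) * (1 / ((n : ℝ) + 1) ^ 2))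
    (base_summable.mul_left _)
  filter_upwards [eventually_ge_atTop ⌈t ^ 2 / (2 * π ^ 2)⌉₊] with n hn
  have hn' : t ^ 2 / (2 * π ^ 2) ≤ (n : ℝ) + 1 := by
    calc t ^ 2 / (2 * π ^ 2) ≤ (⌈t ^ 2 / (2 * π ^ 2)⌉₊ : ℝ) := Nat.le_ceil _
    _ ≤ (n : ℝ) := by exact_mod_cast hn
    _ ≤ (n : ℝ) + 1 := by linarith
  have hn0 : (0:ℝ) ≤ (n : ℝ) := n.cast_nonneg
  have ht2 : t ^ 2 ≤ 2 * π ^ 2 * ((n : ℝ) + 1) := by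
    rw [div_le_iff₀ (by positivity)] at hn'
    linarith
  have ht3 : t ^ 2 ≤ 2 * π ^ 2 * ((n : ℝ) + 1) ^ 2 := by nlinarith
  have hden : 2 * π ^ 2 * ((n : ℝ) + 1) ^ 2 ≤ 4 * π ^ 2 * ((n : ℝ) + 1) ^ 2 - t ^ 2 := by
    nlinarith
  have hdpos : 0 < 4 * π ^ 2 * ((n : ℝ) + 1) ^ 2 - t ^ 2 := by nlinarith
  rw [Real.norm_eq_abs, abs_abs, abs_div, abs_of_pos hdpos, abs_mul]
  rw [div_le_iff₀ hdpos]
  have : 2 * |t| / π ^ 2 * (1 / ((n : ℝ) + 1) ^ 2) * (2 * π ^ 2 * ((n : ℝ) + 1) ^ 2)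
      = |4| * |t| := by
    rw [abs_of_pos (by norm_num : (0:ℝ) < 4)]
    field_simp
    ring
  calc |4| * |t| = 2 * |t| / π ^ 2 * (1 / ((n : ℝ) + 1) ^ 2) * (2 * π ^ 2 * ((n : ℝ) + 1) ^ 2) :=
        this.symm
    _ ≤ _ := by
        apply mul_le_mul_of_nonneg_left hden
        positivity

theorem stmt_6 (t : ℝ) (ht : ∀ k : ℤ, t ≠ 2 * π * k) :
    (Real.cos (t / 2) / Real.sin (t / 2) =
      2 / t - ∑' n : ℕ, 4 * t / (4 * π ^ 2 * ((n : ℝ) + 1) ^ 2 - t ^ 2)) ∧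
    Summable (fun n : ℕ => |4 * t / (4 * π ^ 2 * ((n : ℝ) + 1) ^ 2 - t ^ 2)|) := by
  obtain ⟨x, rfl⟩ : ∃ x : ℝ, t = 2 * π * x :=
    ⟨t / (2 * π), by field_simp⟩
  refine ⟨?_, final_summable _⟩
  have hπ := Real.pi_pos
  have hx : ∀ k : ℤ, x ≠ k := by
    intro k h
    exact ht k (by rw [h])
  have hx0 : x ≠ 0 := fun h => hx 0 (by simpa using h)
  have hmain := cot_series x hx
  have hts : ∀ n : ℕ, -(2 * x) / (((n : ℝ) + 1) ^ 2 - x ^ 2)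
      = π * -(4 * (2 * π * x) / (4 * π ^ 2 * ((n : ℝ) + 1) ^ 2 - (2 * π * x) ^ 2)) := by
    intro n
    have hf := factor_ne x hx n
    have hd1 : ((n : ℝ) + 1) ^ 2 - x ^ 2 ≠ 0 := by
      intro h
      apply hf
      have hn0 : (((n:ℝ) + 1) ^ 2) ≠ 0 := by positivity
      field_simp
      linarith
    have hd2 : 4 * π ^ 2 * ((n : ℝ) + 1) ^ 2 - (2 * π * x) ^ 2 ≠ 0 := by
      intro h
      apply hd1
      have hp2 : (0:ℝ) < 4 * π ^ 2 := by positivity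
      nlinarith
    rw [show 4 * π ^ 2 * ((n : ℝ) + 1) ^ 2 - (2 * π * x) ^ 2 = 4 * π ^ 2 * (((n : ℝ) + 1) ^ 2 - x ^ 2) by ring]
    field_simp
  have h3 : Real.cos (π * x) / Real.sin (π * x)
      = (1 / x + ∑' n : ℕ, -(2 * x) / (((n : ℝ) + 1) ^ 2 - x ^ 2)) / π := by
    rw [eq_div_iff Real.pi_ne_zero, mul_comm, ← mul_div_assoc]
    exact hmain
  have hhalf : 2 * π * x / 2 = π * x := by ring
  rw [hhalf, h3, tsum_congr hts, tsum_mul_left, tsum_neg]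
  field_simp
  ring
end

section
/- For every complex x with x ∉ (-∞, 0], Li₂(-x) + Li₂(-1/x) = -π²/6 - (1/2)(log x)², where Li₂ is the dilogarithm and log is the principal branch. -/
open Real Complex Set MeasureTheory

/-- The dilogarithm, defined by `Li₂(z) = -∫₀^z log(1-t)/t dt` along the
segment from `0` to `z` (parametrized by `t = s·z`, `s ∈ [0,1]`). -/
noncomputable def Li2 (z : ℂ) : ℂ := -∫ s in (0:ℝ)..1, Complex.log (1 - (s : ℂ) * z) / (s : ℂ)

lemma slit1 {z : ℂ} (hz : ∀ r : ℝ, 1 ≤ r → z ≠ (r : ℂ)) {s : ℝ} (h0 : 0 ≤ s) (h1 : s ≤ 1) :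
    1 - (s : ℂ) * z ∈ Complex.slitPlane := by
  rw [Complex.mem_slitPlane_iff]
  by_contra h
  push_neg at h
  obtain ⟨hre, him⟩ := h
  simp only [Complex.sub_re, Complex.sub_im, Complex.mul_re, Complex.mul_im, Complex.one_re,
    Complex.one_im, Complex.ofReal_re, Complex.ofReal_im] at hre him
  -- him : 0 - (s * z.im + 0 * z.re) = 0 ; hre : 1 - (s * z.re - 0 * z.im) ≤ 0
  have hsim : s * z.im = 0 := by linarith
  have hsre : 1 ≤ s * z.re := by linarith
  have hs : 0 < s := by
    rcases h0.lt_or_eq with h | h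
    · exact h
    · exfalso; rw [← h] at hsre; simp at hsre; linarith
  have hzim : z.im = 0 := by
    rcases mul_eq_zero.mp hsim with h | h
    · exact absurd h hs.ne'
    · exact h
  have hzre : 1 ≤ z.re := by nlinarith
  exact hz z.re hzre (Complex.ext (by simp) (by simp [hzim]))

lemma ball_slit {z₀ : ℂ} (hz : ∀ r : ℝ, 1 ≤ r → z₀ ≠ (r : ℂ)) :
    ∃ ε > 0, ∀ z ∈ Metric.ball z₀ ε, ∀ r : ℝ, 1 ≤ r → z ≠ (r : ℂ) := by
  set K : Set ℂ := {w | 1 ≤ w.re ∧ w.im = 0} with hK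
  have hKc : IsClosed K :=
    (isClosed_le continuous_const Complex.continuous_re).inter
      (isClosed_eq Complex.continuous_im continuous_const)
  have hz₀ : z₀ ∈ Kᶜ := by
    intro hmem
    exact hz z₀.re hmem.1 (Complex.ext (by simp) (by simp [hmem.2]))
  obtain ⟨ε, εpos, hε⟩ := Metric.isOpen_iff.mp hKc.isOpen_compl z₀ hz₀
  exact ⟨ε, εpos, fun z hzb r hr hzr => (hε hzb) ⟨by simp [hzr, hr], by simp [hzr]⟩⟩

lemma li2_integrand_integrable {z : ℂ} (hz : ∀ r : ℝ, 1 ≤ r → z ≠ (r : ℂ)) :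
    IntervalIntegrable (fun s : ℝ => Complex.log (1 - (s : ℂ) * z) / (s : ℂ)) MeasureTheory.volume 0 1 := by
  set g : ℝ → ℂ := fun s => if s = 0 then -z else Complex.log (1 - (s : ℂ) * z) / (s : ℂ) with hg
  have hslope : Filter.Tendsto (fun s : ℝ => Complex.log (1 - (s : ℂ) * z) / (s : ℂ))
      (nhdsWithin 0 {(0:ℝ)}ᶜ) (nhds (-z)) := by
    have hd : HasDerivAt (fun s : ℝ => Complex.log (1 - (s : ℂ) * z)) (-z) 0 := by
      have h1 : HasDerivAt (fun s : ℝ => 1 - (s : ℂ) * z) (-z) 0 := by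
        simpa using ((Complex.ofRealCLM.hasDerivAt (x := (0:ℝ))).mul_const z).const_sub 1
      have := h1.clog_real
        (by simpa using (slit1 hz le_rfl zero_le_one : 1 - (0:ℂ)*z ∈ Complex.slitPlane))
      simpa using this
    refine Filter.Tendsto.congr' ?_ (hasDerivAt_iff_tendsto_slope.mp hd)
    filter_upwards [self_mem_nhdsWithin] with s hs
    have hs' : (s : ℝ) ≠ 0 := hs
    simp [slope, hs', div_eq_inv_mul]
  have hg0 : g 0 = -z := by simp [hg]
  have hgcont : ContinuousOn g (Icc 0 1) := by
    intro t ht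
    rcases eq_or_ne t 0 with rfl | ht0
    · rw [← continuousWithinAt_diff_self]
      unfold ContinuousWithinAt
      rw [hg0]
      refine Filter.Tendsto.congr' ?_
        (hslope.mono_left (nhdsWithin_mono _ (fun s hs => hs.2)))
      filter_upwards [self_mem_nhdsWithin] with s hs
      have : s ≠ 0 := hs.2
      simp [hg, this]
    · have h1 : ContinuousAt (fun s : ℝ => 1 - (s : ℂ) * z) t := by fun_prop
      have hc : ContinuousAt (fun s : ℝ => Complex.log (1 - (s : ℂ) * z) / (s : ℂ)) t := by
        refine ContinuousAt.div (h1.clog ?_) (by fun_prop) (by exact_mod_cast ht0)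
        exact slit1 hz ht.1 ht.2
      refine (hc.congr ?_).continuousWithinAt
      filter_upwards [isOpen_compl_singleton.mem_nhds (by exact ht0 : t ∈ ({(0:ℝ)}ᶜ : Set ℝ))] with s hs
      exact (if_neg (hs : s ≠ 0)).symm
  have hint : IntervalIntegrable g MeasureTheory.volume 0 1 :=
    (hgcont.mono (by rw [uIcc_of_le zero_le_one])).intervalIntegrable
  rw [intervalIntegrable_iff] at hint ⊢
  refine hint.congr_fun ?_ (by rw [uIoc_of_le zero_le_one]; exact measurableSet_Ioc)
  intro s hs
  rw [uIoc_of_le zero_le_one] at hs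
  simp [hg, (ne_of_gt hs.1 : s ≠ 0)]

lemma int_inv {z : ℂ} (hz : ∀ r : ℝ, 1 ≤ r → z ≠ (r : ℂ)) (h0 : z ≠ 0) :
    ∫ s in (0:ℝ)..1, (1 - (s : ℂ) * z)⁻¹ = -Complex.log (1 - z) / z := by
  have key : ∀ t ∈ uIcc (0:ℝ) 1,
      HasDerivAt (fun s : ℝ => -Complex.log (1 - (s : ℂ) * z) / z) (1 - (t : ℂ) * z)⁻¹ t := by
    intro t ht
    rw [uIcc_of_le zero_le_one] at ht
    have h1 : HasDerivAt (fun s : ℝ => 1 - (s : ℂ) * z) (-z) t := by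
      simpa using ((Complex.ofRealCLM.hasDerivAt (x := t)).mul_const z).const_sub 1
    have h2 := (h1.clog_real (slit1 hz ht.1 ht.2)).neg.div_const z
    refine HasDerivAt.congr_deriv h2 ?_
    have hne : 1 - (t : ℂ) * z ≠ 0 := Complex.slitPlane_ne_zero (slit1 hz ht.1 ht.2)
    field_simp
  have hcont : IntervalIntegrable (fun s : ℝ => (1 - (s : ℂ) * z)⁻¹) MeasureTheory.volume 0 1 := by
    apply ContinuousOn.intervalIntegrable
    intro t ht
    rw [uIcc_of_le zero_le_one] at ht
    have hne : 1 - (t : ℂ) * z ≠ 0 := Complex.slitPlane_ne_zero (slit1 hz ht.1 ht.2)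
    exact ((by fun_prop : ContinuousOn (fun s : ℝ => 1 - (s:ℂ)*z) (uIcc 0 1)) t (by
      rw [uIcc_of_le zero_le_one]; exact ht)).inv₀ hne
  have := intervalIntegral.integral_eq_sub_of_hasDerivAt key hcont
  rw [this]
  simp

lemma li2_hasDerivAt {z : ℂ} (hz : ∀ r : ℝ, 1 ≤ r → z ≠ (r : ℂ)) (h0 : z ≠ 0) :
    HasDerivAt Li2 (-Complex.log (1 - z) / z) z := by
  obtain ⟨ε, εpos, hball⟩ := ball_slit hz
  have hε' : (0:ℝ) < ε / 2 := half_pos εpos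
  set K : Set ℂ := (fun p : ℝ × ℂ => 1 - (p.1 : ℂ) * p.2) '' (Icc 0 1 ×ˢ Metric.closedBall z (ε/2))
    with hK
  have hKcomp : IsCompact K :=
    (isCompact_Icc.prod (isCompact_closedBall z (ε/2))).image (by fun_prop)
  have hsub : Metric.closedBall z (ε/2) ⊆ Metric.ball z ε :=
    Metric.closedBall_subset_ball (by linarith)
  have hK0 : ∀ w ∈ K, w ≠ 0 := by
    rintro _ ⟨⟨s, w⟩, ⟨hs, hw⟩, rfl⟩ h
    exact Complex.slitPlane_ne_zero (slit1 (hball w (hsub hw)) hs.1 hs.2) h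
  have hKne : K.Nonempty :=
    ⟨_, ⟨(0, z), ⟨⟨le_rfl, zero_le_one⟩, Metric.mem_closedBall_self hε'.le⟩, rfl⟩⟩
  obtain ⟨u, huK, humin⟩ := hKcomp.exists_isMinOn hKne continuous_norm.continuousOn
  have hm : 0 < ‖u‖ := norm_pos_iff.mpr (hK0 u huK)
  have key := intervalIntegral.hasDerivAt_integral_of_dominated_loc_of_deriv_le
    (F := fun (w : ℂ) (s : ℝ) => Complex.log (1 - (s : ℂ) * w) / (s : ℂ))
    (F' := fun (w : ℂ) (s : ℝ) => -(1 - (s : ℂ) * w)⁻¹)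
    (x₀ := z) (bound := fun _ => ‖u‖⁻¹) (a := 0) (b := 1) (μ := MeasureTheory.volume)
    (s := Metric.ball z (ε/2)) (Metric.ball_mem_nhds z hε') ?_ (li2_integrand_integrable hz) ?_ ?_ ?_ ?_
  · have h3 := key.2.neg
    have : HasDerivAt Li2 (-∫ s in (0:ℝ)..1, -(1 - (s : ℂ) * z)⁻¹) z := h3
    rwa [intervalIntegral.integral_neg, neg_neg, int_inv hz h0] at this
  · refine Filter.Eventually.of_forall fun w => ?_
    exact ((Complex.measurable_log.comp (by fun_prop)).div (by fun_prop)).aestronglyMeasurable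
  · exact ((by fun_prop : Measurable fun s : ℝ => 1 - (s:ℂ)*z).inv.neg).aestronglyMeasurable
  · refine Filter.Eventually.of_forall fun t ht w hw => ?_
    rw [uIoc_of_le zero_le_one] at ht
    have hle : ‖u‖ ≤ ‖1 - (t : ℂ) * w‖ :=
      humin ⟨(t, w), ⟨⟨ht.1.le, ht.2⟩, Metric.ball_subset_closedBall hw⟩, rfl⟩
    rw [norm_neg, norm_inv]
    exact inv_anti₀ hm hle
  · exact intervalIntegrable_const
  · refine Filter.Eventually.of_forall fun t ht w hw => ?_
    rw [uIoc_of_le zero_le_one] at ht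
    have hslit : 1 - (t : ℂ) * w ∈ Complex.slitPlane :=
      slit1 (hball w (Metric.ball_subset_ball (by linarith) hw)) ht.1.le ht.2
    have hne : 1 - (t : ℂ) * w ≠ 0 := Complex.slitPlane_ne_zero hslit
    have htne : (t : ℂ) ≠ 0 := by exact_mod_cast ht.1.ne'
    have h1 : HasDerivAt (fun w : ℂ => 1 - (t : ℂ) * w) (-(t:ℂ)) w := by
      simpa using ((hasDerivAt_id w).const_mul (t:ℂ)).const_sub 1
    have h2 := (h1.clog hslit).div_const (t : ℂ)
    refine HasDerivAt.congr_deriv h2 (Eq.symm ?_)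
    field_simp

lemma sq_sum : HasSum (fun n : ℕ => 1 / ((n : ℝ) + 1) ^ 2) (π ^ 2 / 6) := by
  have h := (hasSum_nat_add_iff (f := fun n : ℕ => (1:ℝ) / (n:ℝ)^2) 1).mpr
    (by simpa using hasSum_zeta_two)
  refine h.congr_fun fun n => by push_cast; ring_nf

lemma eta2 : HasSum (fun n : ℕ => (-1 : ℝ) ^ n / ((n : ℝ) + 1) ^ 2) (π ^ 2 / 12) := by
  set d : ℕ → ℝ := fun n => 1 / ((n : ℝ) + 1) ^ 2 - (-1 : ℝ) ^ n / ((n : ℝ) + 1) ^ 2 with hd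
  have hi : Function.Injective (fun k : ℕ => 2 * k + 1) := fun a b h => by simpa using h
  have hzero : ∀ n, n ∉ Set.range (fun k : ℕ => 2 * k + 1) → d n = 0 := by
    intro n hn
    have heven : Even n := by
      rcases Nat.even_or_odd n with h | h
      · exact h
      · exact absurd ⟨h.choose, (h.choose_spec.trans (by ring)).symm⟩ hn
    simp [hd, heven.neg_one_pow]
  have hcomp : HasSum (d ∘ fun k : ℕ => 2 * k + 1) (π ^ 2 / 12) := by
    have h := sq_sum.mul_left (1/2 : ℝ)
    have h2 : HasSum (fun k : ℕ => (1/2 : ℝ) * (1 / ((k:ℝ) + 1) ^ 2)) (π ^ 2 / 12) := by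
      rw [show π ^ 2 / 12 = 1 / 2 * (π ^ 2 / 6) by ring]; exact h
    refine h2.congr_fun fun k => ?_
    have hodd : Odd (2 * k + 1) := ⟨k, by ring⟩
    simp only [Function.comp, hd, hodd.neg_one_pow]
    push_cast
    field_simp
    ring
  have hdsum : HasSum d (π ^ 2 / 12) := (Function.Injective.hasSum_iff hi hzero).mp hcomp
  have h2 : HasSum (fun n : ℕ => (-1 : ℝ) ^ n / ((n : ℝ) + 1) ^ 2) (π ^ 2 / 6 - π ^ 2 / 12) :=
    (sq_sum.sub hdsum).congr_fun (fun n => by simp [hd])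
  convert h2 using 1
  ring

lemma real_int : ∫ s in (0:ℝ)..1, Real.log (1 + s) / s = π ^ 2 / 12 := by
  set F : ℕ → ℝ → ℝ := fun n s => (-1 : ℝ) ^ n * s ^ n / ((n : ℝ) + 1) with hF
  have hF_int : ∀ n, Integrable (F n) (volume.restrict (Ioc (0:ℝ) 1)) := fun n =>
    ((continuous_const.mul (continuous_pow n)).div_const _).integrableOn_Ioc
  have hF_val : ∀ n, ∫ s in Ioc (0:ℝ) 1, F n s = (-1 : ℝ) ^ n / ((n : ℝ) + 1) ^ 2 := by
    intro n
    rw [← intervalIntegral.integral_of_le zero_le_one]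
    have h1 : ∫ s in (0:ℝ)..1, F n s = ((-1:ℝ)^n / ((n:ℝ)+1)) * ∫ s in (0:ℝ)..1, s ^ n := by
      rw [← intervalIntegral.integral_const_mul]
      congr 1; ext s; simp only [hF]; ring
    have h2 : ((n:ℝ) + 1) ≠ 0 := by positivity
    rw [h1, integral_pow]
    push_cast
    field_simp
    ring
  have hF_norm : ∀ n, ∫ s in Ioc (0:ℝ) 1, ‖F n s‖ = 1 / ((n : ℝ) + 1) ^ 2 := by
    intro n
    have heq : ∀ s ∈ Ioc (0:ℝ) 1, ‖F n s‖ = s ^ n / ((n:ℝ)+1) := by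
      intro s hs
      simp only [hF, Real.norm_eq_abs, abs_div, abs_mul, _root_.abs_pow, abs_neg, abs_one,
        one_pow, one_mul, abs_of_pos hs.1, abs_of_pos (show (0:ℝ) < (n:ℝ)+1 by positivity)]
    rw [setIntegral_congr_fun measurableSet_Ioc heq, ← intervalIntegral.integral_of_le zero_le_one,
      intervalIntegral.integral_div, integral_pow]
    have h2 : ((n:ℝ) + 1) ≠ 0 := by positivity
    push_cast
    field_simp
    ring
  have hsummable : Summable fun n => ∫ s in Ioc (0:ℝ) 1, ‖F n s‖ :=
    Summable.congr sq_sum.summable fun n => (hF_norm n).symm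
  have key := integral_tsum_of_summable_integral_norm hF_int hsummable
  have hpt : ∀ᵐ s ∂(volume.restrict (Ioc (0:ℝ) 1)), (∑' n, F n s) = Real.log (1 + s) / s := by
    rw [← restrict_Ioo_eq_restrict_Ioc]
    filter_upwards [ae_restrict_mem measurableSet_Ioo] with s hs
    have hs0 : s ≠ 0 := hs.1.ne'
    have habs : |(-s)| < 1 := by rw [abs_neg, abs_of_pos hs.1]; exact hs.2
    have hsum := (Real.hasSum_pow_div_log_of_abs_lt_one habs).mul_left (-1/s)
    have heq : ∀ n : ℕ, (-1/s) * ((-s) ^ (n+1) / ((n:ℝ)+1)) = F n s := by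
      intro n
      have h2 : ((n:ℝ) + 1) ≠ 0 := by positivity
      rw [hF, neg_pow, pow_succ]
      field_simp
      ring
    have hval : (-1/s) * -Real.log (1 - (-s)) = Real.log (1 + s) / s := by
      rw [sub_neg_eq_add]
      field_simp
    rw [← hval]
    exact ((hsum.congr_fun fun n => (heq n).symm).tsum_eq).symm ▸ rfl
  rw [intervalIntegral.integral_of_le zero_le_one]
  calc ∫ s in Ioc (0:ℝ) 1, Real.log (1 + s) / s
      = ∫ s in Ioc (0:ℝ) 1, ∑' n, F n s := (integral_congr_ae hpt).symm
    _ = ∑' n, ∫ s in Ioc (0:ℝ) 1, F n s := key.symm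
    _ = ∑' n : ℕ, (-1:ℝ)^n / ((n:ℝ)+1)^2 := tsum_congr fun n => hF_val n
    _ = π ^ 2 / 12 := eta2.tsum_eq

lemma li2_neg_one : Li2 (-1) = -(π : ℂ) ^ 2 / 12 := by
  unfold Li2
  have hcg : ∀ s ∈ uIcc (0:ℝ) 1,
      Complex.log (1 - (s : ℂ) * (-1)) / (s : ℂ) = ((Real.log (1 + s) / s : ℝ) : ℂ) := by
    intro s hs
    rw [uIcc_of_le zero_le_one] at hs
    have h1 : (1 : ℂ) - (s : ℂ) * (-1) = ((1 + s : ℝ) : ℂ) := by push_cast; ring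
    rw [h1, ← Complex.ofReal_log (by linarith [hs.1] : (0:ℝ) ≤ 1 + s), Complex.ofReal_div]
  rw [intervalIntegral.integral_congr hcg, intervalIntegral.integral_ofReal, real_int]
  push_cast
  ring

lemma log_quot {w : ℂ} (hw : w ∈ Complex.slitPlane) :
    Complex.log (1 + 1/w) = Complex.log (1 + w) - Complex.log w := by
  have hw0 : w ≠ 0 := Complex.slitPlane_ne_zero hw
  have hns : 0 < Complex.normSq w := Complex.normSq_pos.mpr hw0
  have hv0 : 1 + 1/w ≠ 0 := by
    intro h
    have hw1 : w = -1 := by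
      field_simp at h
      linear_combination h
    rw [hw1] at hw
    simp only [Complex.mem_slitPlane_iff, Complex.neg_re, Complex.one_re, Complex.neg_im,
      Complex.one_im, neg_zero, ne_eq, not_true_eq_false, or_false] at hw
    norm_num at hw
  have hvim : (1 + 1/w).im = -w.im / Complex.normSq w := by
    simp [Complex.inv_im]
  have hvre : (1 + 1/w).re = 1 + w.re / Complex.normSq w := by
    simp [Complex.inv_re]
  have hprod : (1 + 1/w) * w = 1 + w := by field_simp; ring
  have harg : Complex.arg (1 + 1/w) + Complex.arg w ∈ Ioc (-π) π := by
    rcases lt_trichotomy w.im 0 with him | him | him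
    · have h1 : Complex.arg w < 0 := Complex.arg_neg_iff.mpr him
      have h2 : -π < Complex.arg w := Complex.neg_pi_lt_arg w
      have h3 : 0 < (1 + 1/w).im := by rw [hvim]; exact div_pos (by linarith) hns
      have h4 : 0 < Complex.arg (1 + 1/w) := by
        rcases (Complex.arg_nonneg_iff.mpr h3.le).lt_or_eq with h | h
        · exact h
        · exact absurd (Complex.arg_eq_zero_iff.mp h.symm).2 h3.ne'
      have h5 : Complex.arg (1 + 1/w) ≤ π := Complex.arg_le_pi _
      constructor <;> linarith
    · have hre : 0 < w.re := by
        rcases Complex.mem_slitPlane_iff.mp hw with h | h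
        · exact h
        · exact absurd him h
      have h1 : Complex.arg w = 0 := Complex.arg_eq_zero_iff.mpr ⟨hre.le, him⟩
      have h2 : Complex.arg (1 + 1/w) = 0 := by
        refine Complex.arg_eq_zero_iff.mpr ⟨?_, by rw [hvim, him]; simp⟩
        rw [hvre]
        positivity
      rw [h1, h2]
      simp [Real.pi_pos, Real.pi_pos.le]
    · have h1 : 0 < Complex.arg w := by
        rcases (Complex.arg_nonneg_iff.mpr him.le).lt_or_eq with h | h
        · exact h
        · exact absurd (Complex.arg_eq_zero_iff.mp h.symm).2 him.ne'
      have h2 : Complex.arg w ≤ π := Complex.arg_le_pi _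
      have h3 : (1 + 1/w).im < 0 := by
        rw [hvim]
        exact div_neg_of_neg_of_pos (by linarith) hns
      have h4 : Complex.arg (1 + 1/w) < 0 := Complex.arg_neg_iff.mpr h3
      have h5 : -π < Complex.arg (1 + 1/w) := Complex.neg_pi_lt_arg _
      constructor <;> linarith
  rw [← hprod, Complex.log_mul hv0 hw0 harg]
  ring

lemma mem1 {w : ℂ} (hw : w ∈ Complex.slitPlane) : ∀ r : ℝ, 1 ≤ r → -w ≠ (r : ℂ) := by
  intro r hr h
  have hw1 : w = ((-r : ℝ) : ℂ) := by push_cast; linear_combination -h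
  rw [hw1, Complex.mem_slitPlane_iff] at hw
  simp only [Complex.ofReal_re, Complex.ofReal_im, ne_eq, not_true_eq_false, or_false] at hw
  simp at hw
  linarith

lemma mem2 {w : ℂ} (hw : w ∈ Complex.slitPlane) : ∀ r : ℝ, 1 ≤ r → -1 / w ≠ (r : ℂ) := by
  intro r hr h
  have hw0 : w ≠ 0 := Complex.slitPlane_ne_zero hw
  have hr0 : (r : ℂ) ≠ 0 := by
    exact_mod_cast (by linarith : (0:ℝ) < r).ne'
  have hw1 : w = ((-1 / r : ℝ) : ℂ) := by
    rw [div_eq_iff hw0] at h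
    push_cast
    field_simp
    linear_combination -h
  rw [hw1, Complex.ofReal_mem_slitPlane] at hw
  have hrpos : (0:ℝ) < r := lt_of_lt_of_le one_pos hr
  have : -1 / r < 0 := div_neg_of_neg_of_pos (by norm_num) hrpos
  linarith

lemma G_deriv {w : ℂ} (hw : w ∈ Complex.slitPlane) :
    HasDerivAt (fun w : ℂ => Li2 (-w) + Li2 (-1 / w) + (1/2 : ℂ) * (Complex.log w) ^ 2) 0 w := by
  have hw0 : w ≠ 0 := Complex.slitPlane_ne_zero hw
  have hnw0 : -w ≠ 0 := neg_ne_zero.mpr hw0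
  have hiw0 : -1 / w ≠ 0 := div_ne_zero (neg_ne_zero.mpr one_ne_zero) hw0
  have d1 : HasDerivAt (fun w : ℂ => Li2 (-w))
      ((-Complex.log (1 - -w) / -w) * (-1)) w := by
    have := (li2_hasDerivAt (mem1 hw) hnw0).comp w (hasDerivAt_neg w)
    exact this
  have hinner : HasDerivAt (fun w : ℂ => -1 / w) ((w ^ 2)⁻¹) w := by
    have h := (hasDerivAt_inv hw0).neg
    simp only [neg_neg] at h
    simp only [neg_div, one_div]
    exact h
  have d2 : HasDerivAt (fun w : ℂ => Li2 (-1 / w))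
      ((-Complex.log (1 - -1 / w) / (-1 / w)) * (w ^ 2)⁻¹) w := by
    have := (li2_hasDerivAt (mem2 hw) hiw0).comp w hinner
    exact this
  have d3 : HasDerivAt (fun w : ℂ => (1/2 : ℂ) * (Complex.log w) ^ 2)
      ((1/2 : ℂ) * (2 * Complex.log w ^ 1 * w⁻¹)) w :=
    ((Complex.hasDerivAt_log hw).pow 2).const_mul _
  have hsum := (d1.add d2).add d3
  refine HasDerivAt.congr_deriv hsum ?_
  have e1 : (1 : ℂ) - -w = 1 + w := by ring
  have e2 : (1 : ℂ) - -1 / w = 1 + 1 / w := by ring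
  rw [e1, e2, log_quot hw]
  field_simp
  ring

theorem stmt_7 (x : ℂ) (hx : x ∈ Complex.slitPlane) :
    Li2 (-x) + Li2 (-1 / x) = -(π : ℂ) ^ 2 / 6 - (1/2) * (Complex.log x) ^ 2 := by
  set G : ℂ → ℂ := fun w => Li2 (-w) + Li2 (-1 / w) + (1/2 : ℂ) * (Complex.log w) ^ 2 with hGdef
  set c : ℝ → ℂ := fun t => 1 + (t : ℂ) * (x - 1) with hcdef
  have hc : ∀ t ∈ Icc (0:ℝ) 1, c t ∈ Complex.slitPlane := by
    intro t ht
    have := starConvex_one_slitPlane hx (sub_nonneg.mpr ht.2) ht.1 (by ring)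
    convert this using 1
    simp [hcdef, Complex.real_smul]
    push_cast
    ring
  have hcd : ∀ t : ℝ, HasDerivAt c (x - 1) t := by
    intro t
    simpa [hcdef] using ((Complex.ofRealCLM.hasDerivAt (x := t)).mul_const (x - 1)).const_add 1
  have hh : ∀ t ∈ Icc (0:ℝ) 1, HasDerivAt (G ∘ c) (0 * (x - 1)) t := fun t ht =>
    (G_deriv (hc t ht)).comp t (hcd t)
  have hconst := constant_of_has_deriv_right_zero
    (f := G ∘ c) (a := 0) (b := 1)
    (fun t ht => ((hh t ht).continuousAt).continuousWithinAt)
    (fun t ht => by simpa using ((hh t (Ico_subset_Icc_self ht)).hasDerivWithinAt))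
  have h10 := hconst 1 (by norm_num)
  have hc1 : c 1 = x := by simp [hcdef]
  have hc0 : c 0 = 1 := by simp [hcdef]
  have hG1 : G 1 = 2 * Li2 (-1) := by
    rw [hGdef]
    norm_num [Complex.log_one]
    ring
  have hGx : G x = G 1 := by
    have := h10
    simp only [Function.comp, hc1, hc0] at this
    exact this
  have hG1' : Li2 (-1) + Li2 (-1/1) + (1/2 : ℂ) * Complex.log 1 ^ 2 = 2 * Li2 (-1) := by
    norm_num [Complex.log_one]
    ring
  have hGx' : Li2 (-x) + Li2 (-1 / x) + (1/2 : ℂ) * Complex.log x ^ 2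
      = Li2 (-1) + Li2 (-1/1) + (1/2 : ℂ) * Complex.log 1 ^ 2 := hGx
  linear_combination hGx' + hG1' + 2 * li2_neg_one
end

section
/- Let q be complex with |q| < 1 and let x be complex with |x| < 1. Then Σ_{n=0}^∞ (n+1) x q^n/(1 - x q^n) = Σ_{n=0}^∞ x^{n+1}/(1 - q^{n+1})², both series converging absolutely. -/
set_option maxHeartbeats 1000000

open scoped BigOperators

/-- geometric series starting at 1 -/
lemma aux_geom_succ (z : ℂ) (hz : ‖z‖ < 1) :
    ∑' m : ℕ, z ^ (m + 1) = z / (1 - z) := by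
  have : ∑' m : ℕ, z ^ (m + 1) = ∑' m : ℕ, z * z ^ m := by
    simp [pow_succ, mul_comm]
  rw [this, tsum_mul_left, tsum_geometric_of_norm_lt_one hz, div_eq_mul_inv]

lemma aux_deriv_geom (z : ℂ) (hz : ‖z‖ < 1) :
    ∑' n : ℕ, ((n : ℂ) + 1) * z ^ n = 1 / (1 - z) ^ 2 := by
  have h1 : Summable fun n : ℕ => (n : ℂ) * z ^ n := by
    have := summable_pow_mul_geometric_of_norm_lt_one (R := ℂ) 1 hz
    simpa using this
  have h2 : Summable fun n : ℕ => z ^ n := summable_geometric_of_norm_lt_one hz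
  have hzne : (1 : ℂ) - z ≠ 0 := by
    intro h
    have : z = 1 := by linear_combination -h
    simp [this] at hz
  calc ∑' n : ℕ, ((n : ℂ) + 1) * z ^ n
      = ∑' n : ℕ, ((n : ℂ) * z ^ n + z ^ n) := by
        congr 1; ext n; ring
    _ = (∑' n : ℕ, (n : ℂ) * z ^ n) + ∑' n : ℕ, z ^ n := Summable.tsum_add h1 h2
    _ = z / (1 - z) ^ 2 + (1 - z)⁻¹ :=
        by rw [tsum_coe_mul_geometric_of_norm_lt_one hz, tsum_geometric_of_norm_lt_one hz]
    _ = 1 / (1 - z) ^ 2 := by field_simp; ring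

theorem stmt_11 (q x : ℂ) (hq : ‖q‖ < 1) (hx : ‖x‖ < 1) :
    (∑' n : ℕ, ((n : ℂ) + 1) * x * q ^ n / (1 - x * q ^ n) =
      ∑' n : ℕ, x ^ (n + 1) / (1 - q ^ (n + 1)) ^ 2) ∧
    Summable (fun n : ℕ => ‖((n : ℂ) + 1) * x * q ^ n / (1 - x * q ^ n)‖) ∧
    Summable (fun n : ℕ => ‖x ^ (n + 1) / (1 - q ^ (n + 1)) ^ 2‖) := by
  have hq0 : (0:ℝ) ≤ ‖q‖ := norm_nonneg q
  have hq1 : ‖q‖ ≤ 1 := hq.le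
  -- The double family
  set F : ℕ × ℕ → ℂ := fun p => ((p.1 : ℂ) + 1) * x ^ (p.2 + 1) * q ^ (p.1 * (p.2 + 1)) with hF
  -- norm bound
  have hbound : ∀ p : ℕ × ℕ, ‖F p‖ ≤ (((p.1 : ℝ) + 1) * ‖q‖ ^ p.1) * ‖x‖ ^ (p.2 + 1) := by
    intro ⟨n, m⟩
    have hcast : ‖((n : ℂ) + 1)‖ = (n : ℝ) + 1 := by
      rw [show ((n : ℂ) + 1) = ((n + 1 : ℕ) : ℂ) by push_cast; ring]
      rw [Complex.norm_natCast]
      push_cast; ring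
    have : ‖F (n, m)‖ = ((n : ℝ) + 1) * ‖x‖ ^ (m + 1) * ‖q‖ ^ (n * (m + 1)) := by
      rw [hF]
      simp only [norm_mul, norm_pow, hcast]
    rw [this]
    have hqq : ‖q‖ ^ (n * (m + 1)) ≤ ‖q‖ ^ n :=
      pow_le_pow_of_le_one hq0 hq1 (Nat.le_mul_of_pos_right n (Nat.succ_pos m))
    calc ((n : ℝ) + 1) * ‖x‖ ^ (m + 1) * ‖q‖ ^ (n * (m + 1))
        ≤ ((n : ℝ) + 1) * ‖x‖ ^ (m + 1) * ‖q‖ ^ n := by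
          apply mul_le_mul_of_nonneg_left hqq; positivity
      _ = (((n : ℝ) + 1) * ‖q‖ ^ n) * ‖x‖ ^ (m + 1) := by ring
  -- summable majorant
  have hmaj : Summable fun p : ℕ × ℕ => (((p.1 : ℝ) + 1) * ‖q‖ ^ p.1) * ‖x‖ ^ (p.2 + 1) := by
    have h1 : Summable fun n : ℕ => ((n : ℝ) + 1) * ‖q‖ ^ n := by
      have ha : Summable fun n : ℕ => (n : ℝ) * ‖q‖ ^ n := by
        have := summable_pow_mul_geometric_of_norm_lt_one (R := ℝ) 1
          (by rwa [Real.norm_eq_abs, abs_of_nonneg hq0])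
        simpa using this
      have hb : Summable fun n : ℕ => ‖q‖ ^ n :=
        summable_geometric_of_lt_one hq0 hq
      simpa [add_mul] using ha.add hb
    have h2 : Summable fun m : ℕ => ‖x‖ ^ (m + 1) := by
      have : Summable fun m : ℕ => ‖x‖ ^ m :=
        summable_geometric_of_lt_one (norm_nonneg x) hx
      exact (summable_nat_add_iff 1).2 this
    exact h1.mul_of_nonneg h2 (fun n => by positivity) (fun m => by positivity)
  have hFnorm : Summable fun p : ℕ × ℕ => ‖F p‖ :=
    hmaj.of_nonneg_of_le (fun p => norm_nonneg _) hbound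
  have hFsum : Summable F := hFnorm.of_norm
  -- inner sums over m (fixed n) give the LHS terms
  have hxqn : ∀ n : ℕ, ‖x * q ^ n‖ < 1 := by
    intro n
    calc ‖x * q ^ n‖ = ‖x‖ * ‖q‖ ^ n := by rw [norm_mul, norm_pow]
      _ ≤ ‖x‖ * 1 := by
          apply mul_le_mul_of_nonneg_left (pow_le_one₀ hq0 hq1) (norm_nonneg x)
      _ < 1 := by simpa using hx
  have hrow : ∀ n : ℕ, ∑' m : ℕ, F (n, m) = ((n : ℂ) + 1) * x * q ^ n / (1 - x * q ^ n) := by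
    intro n
    have hFe : ∀ m : ℕ, F (n, m) = ((n : ℂ) + 1) * (x * q ^ n) ^ (m + 1) := by
      intro m
      simp only [hF]
      rw [mul_pow, ← pow_mul]
      ring_nf
    calc ∑' m : ℕ, F (n, m) = ∑' m : ℕ, ((n : ℂ) + 1) * (x * q ^ n) ^ (m + 1) := by
          simp_rw [hFe]
      _ = ((n : ℂ) + 1) * ∑' m : ℕ, (x * q ^ n) ^ (m + 1) := tsum_mul_left
      _ = ((n : ℂ) + 1) * ((x * q ^ n) / (1 - x * q ^ n)) := by
          rw [aux_geom_succ _ (hxqn n)]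
      _ = ((n : ℂ) + 1) * x * q ^ n / (1 - x * q ^ n) := by ring
  -- inner sums over n (fixed m) give the RHS terms
  have hqm : ∀ m : ℕ, ‖q ^ (m + 1)‖ < 1 := by
    intro m
    rw [norm_pow]
    exact pow_lt_one₀ hq0 hq (Nat.succ_ne_zero m)
  have hcol : ∀ m : ℕ, ∑' n : ℕ, F (n, m) = x ^ (m + 1) / (1 - q ^ (m + 1)) ^ 2 := by
    intro m
    have hFe : ∀ n : ℕ, F (n, m) = x ^ (m + 1) * (((n : ℂ) + 1) * (q ^ (m + 1)) ^ n) := by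
      intro n
      simp only [hF]
      rw [← pow_mul, mul_comm (m + 1) n]
      ring
    calc ∑' n : ℕ, F (n, m)
        = ∑' n : ℕ, x ^ (m + 1) * (((n : ℂ) + 1) * (q ^ (m + 1)) ^ n) := by simp_rw [hFe]
      _ = x ^ (m + 1) * ∑' n : ℕ, ((n : ℂ) + 1) * (q ^ (m + 1)) ^ n := tsum_mul_left
      _ = x ^ (m + 1) * (1 / (1 - q ^ (m + 1)) ^ 2) := by rw [aux_deriv_geom _ (hqm m)]
      _ = x ^ (m + 1) / (1 - q ^ (m + 1)) ^ 2 := by ring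
  -- summability of inner families
  have hrowS : ∀ n : ℕ, Summable fun m : ℕ => F (n, m) :=
    fun n => hFsum.prod_factor n
  have hcolS : ∀ m : ℕ, Summable fun n : ℕ => F (n, m) :=
    fun m => hFsum.prod_symm.prod_factor m
  -- main equality via Fubini
  have hmain : (∑' n : ℕ, ((n : ℂ) + 1) * x * q ^ n / (1 - x * q ^ n)) =
      ∑' n : ℕ, x ^ (n + 1) / (1 - q ^ (n + 1)) ^ 2 := by
    calc (∑' n : ℕ, ((n : ℂ) + 1) * x * q ^ n / (1 - x * q ^ n))
        = ∑' (n : ℕ) (m : ℕ), F (n, m) := by simp_rw [hrow]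
      _ = ∑' (m : ℕ) (n : ℕ), F (n, m) :=
          (Summable.tsum_comm' (f := fun n m => F (n, m)) hFsum hrowS hcolS).symm
      _ = ∑' m : ℕ, x ^ (m + 1) / (1 - q ^ (m + 1)) ^ 2 := by simp_rw [hcol]
  refine ⟨hmain, ?_, ?_⟩
  · -- LHS norm summability
    have hS : Summable fun n : ℕ => ∑' m : ℕ, ‖F (n, m)‖ :=
      ((summable_prod_of_nonneg (fun p => norm_nonneg (F p))).1 hFnorm).2
    apply hS.of_nonneg_of_le (fun n => norm_nonneg _)
    intro n
    rw [← hrow n]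
    exact norm_tsum_le_tsum_norm (hFnorm.prod_factor n)
  · -- RHS norm summability
    have hS : Summable fun m : ℕ => ∑' n : ℕ, ‖F (n, m)‖ :=
      ((summable_prod_of_nonneg (fun p => norm_nonneg (F p.swap))).1 hFnorm.prod_symm).2
    apply hS.of_nonneg_of_le (fun m => norm_nonneg _)
    intro m
    rw [← hcol m]
    exact norm_tsum_le_tsum_norm (hFnorm.prod_symm.prod_factor m)
end

section
/- Let q be complex with 0 < |q| < 1 and x complex with x ∉ q^{-ℕ}. Then the derivative identity x · d/dx log((x;q)_∞) = -Σ_{n=0}^∞ x q^n/(1 - x q^n) holds; equivalently, the logarithmic derivative of the infinite product (x;q)_∞ = Π_{n≥0}(1 - xq^n) with respect to x equals -Σ_{n≥0} q^n/(1 - x q^n). -/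
open Complex Filter Finset Metric

set_option maxHeartbeats 1000000 in
theorem stmt_14 (q x : ℂ) (hq0 : 0 < ‖q‖) (hq : ‖q‖ < 1)
    (hx : ∀ n : ℕ, x * q ^ n ≠ 1) :
    HasDerivAt (fun y : ℂ => ∏' n : ℕ, (1 - y * q ^ n))
      ((∏' n : ℕ, (1 - x * q ^ n)) * (-∑' n : ℕ, q ^ n / (1 - x * q ^ n))) x := by
  have hqn : (0:ℝ) ≤ ‖q‖ := norm_nonneg q
  set R : ℝ := ‖x‖ + 1 with hRdef
  have hR0 : 0 < R := by positivity
  obtain ⟨N, hN⟩ : ∃ N : ℕ, R * ‖q‖ ^ N ≤ 1 / 2 := by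
    obtain ⟨N, hN⟩ := exists_pow_lt_of_lt_one (show (0:ℝ) < 1/(2*R) by positivity) hq
    refine ⟨N, ?_⟩
    have h2 := mul_le_mul_of_nonneg_left hN.le hR0.le
    calc R * ‖q‖ ^ N ≤ R * (1/(2*R)) := h2
    _ = 1/2 := by field_simp
  set U : Set ℂ := Metric.ball x 1 with hUdef
  have hxU : x ∈ U := Metric.mem_ball_self one_pos
  have hyR : ∀ y ∈ U, ‖y‖ < R := by
    intro y hy
    have h1 : ‖y - x‖ < 1 := mem_ball_iff_norm.mp hy
    have h2 : ‖y‖ - ‖x‖ ≤ ‖y - x‖ := norm_sub_norm_le y x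
    simp only [hRdef]; linarith
  -- basic bounds on tail factors
  have hb : ∀ y ∈ U, ∀ n : ℕ, ‖y * q ^ (n + N)‖ ≤ 1/2 * ‖q‖ ^ n := by
    intro y hy n
    rw [norm_mul, norm_pow]
    calc ‖y‖ * ‖q‖ ^ (n + N) = (‖y‖ * ‖q‖ ^ N) * ‖q‖ ^ n := by rw [pow_add]; ring
    _ ≤ (R * ‖q‖ ^ N) * ‖q‖ ^ n := by gcongr; exact (hyR y hy).le
    _ ≤ (1/2) * ‖q‖ ^ n := by gcongr
  have hb2 : ∀ y ∈ U, ∀ n : ℕ, ‖y * q ^ (n + N)‖ ≤ 1/2 := by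
    intro y hy n
    refine (hb y hy n).trans ?_
    have : ‖q‖ ^ n ≤ 1 := pow_le_one₀ hqn hq.le
    nlinarith
  have hne : ∀ y ∈ U, ∀ n : ℕ, (1 : ℂ) - y * q ^ (n + N) ≠ 0 := by
    intro y hy n h
    have h1 : y * q ^ (n + N) = 1 := by linear_combination -h
    have h2 := hb2 y hy n
    rw [h1] at h2
    norm_num at h2
  have hslit : ∀ y ∈ U, ∀ n : ℕ, (1 : ℂ) - y * q ^ (n + N) ∈ Complex.slitPlane := by
    intro y hy n
    rw [Complex.mem_slitPlane_iff]
    left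
    have h2 : (y * q ^ (n + N)).re ≤ ‖y * q ^ (n + N)‖ := by
      exact Complex.re_le_norm _
    have h3 := hb2 y hy n
    simp only [Complex.sub_re, Complex.one_re]
    linarith
  -- summable bound for the logs
  have hu : Summable (fun n : ℕ => (3:ℝ)/4 * ‖q‖ ^ n) :=
    (summable_geometric_of_lt_one hqn hq).mul_left _
  have hlog : ∀ (n : ℕ), ∀ y ∈ U, ‖Complex.log (1 - y * q ^ (n + N))‖ ≤ 3/4 * ‖q‖ ^ n := by
    intro n y hy
    have h1 : ‖-(y * q ^ (n + N))‖ ≤ 1/2 := by rw [norm_neg]; exact hb2 y hy n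
    have h2 := Complex.norm_log_one_add_half_le_self h1
    rw [show (1:ℂ) + -(y * q ^ (n + N)) = 1 - y * q ^ (n + N) by ring] at h2
    refine h2.trans ?_
    rw [norm_neg]
    have := hb y hy n
    nlinarith
  -- derivative of each log factor
  have hfacD : ∀ (m : ℕ) (y : ℂ), HasDerivAt (fun z : ℂ => 1 - z * q ^ m) (-(q ^ m)) y := by
    intro m y
    simpa using ((hasDerivAt_id y).mul_const (q ^ m)).const_sub 1
  have hFd : ∀ (n : ℕ), ∀ y ∈ U,
      HasDerivAt (fun z : ℂ => Complex.log (1 - z * q ^ (n + N)))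
        (-(q ^ (n + N)) / (1 - y * q ^ (n + N))) y := by
    intro n y hy
    exact (hfacD (n + N) y).clog (hslit y hy n)
  have hFdiffOn : ∀ n : ℕ,
      DifferentiableOn ℂ (fun z : ℂ => Complex.log (1 - z * q ^ (n + N))) U :=
    fun n y hy => ((hFd n y hy).differentiableAt).differentiableWithinAt
  -- the log-sum g and its derivative
  have hgdOn : DifferentiableOn ℂ
      (fun w : ℂ => ∑' n : ℕ, Complex.log (1 - w * q ^ (n + N))) U :=
    Complex.differentiableOn_tsum_of_summable_norm hu hFdiffOn Metric.isOpen_ball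
      (fun i w hw => hlog i w hw)
  have hgx : HasDerivAt (fun w : ℂ => ∑' n : ℕ, Complex.log (1 - w * q ^ (n + N)))
      (deriv (fun w : ℂ => ∑' n : ℕ, Complex.log (1 - w * q ^ (n + N))) x) x :=
    (hgdOn.differentiableAt (Metric.isOpen_ball.mem_nhds hxU)).hasDerivAt
  have hsum_deriv : HasSum
      (fun n : ℕ => deriv (fun z : ℂ => Complex.log (1 - z * q ^ (n + N))) x)
      (deriv (fun w : ℂ => ∑' n : ℕ, Complex.log (1 - w * q ^ (n + N))) x) :=
    Complex.hasSum_deriv_of_summable_norm hu hFdiffOn Metric.isOpen_ball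
      (fun i w hw => hlog i w hw) hxU
  have hderiv_eq : ∀ n : ℕ,
      deriv (fun z : ℂ => Complex.log (1 - z * q ^ (n + N))) x
        = -(q ^ (n + N) / (1 - x * q ^ (n + N))) := by
    intro n
    rw [(hFd n x hxU).deriv, neg_div]
  simp only [hderiv_eq] at hsum_deriv
  have htail : Summable (fun n : ℕ => q ^ (n + N) / (1 - x * q ^ (n + N))) := by
    simpa using hsum_deriv.summable.neg
  have hS : Summable (fun n : ℕ => q ^ n / (1 - x * q ^ n)) :=
    (summable_nat_add_iff (f := fun m : ℕ => q ^ m / (1 - x * q ^ m)) N).mp htail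
  have hDg : deriv (fun w : ℂ => ∑' n : ℕ, Complex.log (1 - w * q ^ (n + N))) x
      = -∑' n : ℕ, q ^ (n + N) / (1 - x * q ^ (n + N)) := by
    rw [← hsum_deriv.tsum_eq, tsum_neg]
  -- multipliability and exp representation of the tail product
  have hsumlog : ∀ a : U, Summable fun n : ℕ =>
      Complex.log ((fun (n : ℕ) (a : U) => 1 - (a : ℂ) * q ^ (n + N)) n a) :=
    fun a => Summable.of_norm_bounded hu (fun n => hlog n a a.2)
  have hTexp : ∀ y ∈ U, (∏' n : ℕ, (1 - y * q ^ (n + N)))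
      = Complex.exp (∑' n : ℕ, Complex.log (1 - y * q ^ (n + N))) := by
    intro y hy
    have h := Complex.cexp_tsum_eq_tprod
      (f := fun (n : ℕ) => 1 - y * q ^ (n + N))
      (fun n => hne y hy n) (hsumlog ⟨y, hy⟩)
    exact h.symm
  have hmultail : ∀ y ∈ U, Multipliable fun n : ℕ => 1 - y * q ^ (n + N) := by
    intro y hy
    exact Complex.multipliable_of_summable_log
      (f := fun (n : ℕ) => 1 - y * q ^ (n + N)) (hsumlog ⟨y, hy⟩)
  have hsplit : ∀ y ∈ U, (∏' n : ℕ, (1 - y * q ^ n))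
      = (∏ i ∈ Finset.range N, (1 - y * q ^ i)) * ∏' n : ℕ, (1 - y * q ^ (n + N)) :=
    fun y hy => (Multipliable.prod_mul_tprod_nat_mul'
      (f := fun n : ℕ => 1 - y * q ^ n) (k := N) (hmultail y hy)).symm
  -- derivative of the tail product
  have hT : HasDerivAt (fun y : ℂ => ∏' n : ℕ, (1 - y * q ^ (n + N)))
      (Complex.exp (∑' n : ℕ, Complex.log (1 - x * q ^ (n + N)))
        * deriv (fun w : ℂ => ∑' n : ℕ, Complex.log (1 - w * q ^ (n + N))) x) x := by
    have h1 := hgx.cexp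
    apply h1.congr_of_eventuallyEq
    filter_upwards [Metric.isOpen_ball.mem_nhds hxU] with y hy
    exact hTexp y hy
  -- derivative of the head product
  have hPne : ∀ i : ℕ, (1 : ℂ) - x * q ^ i ≠ 0 := by
    intro i h
    exact hx i (by linear_combination -h)
  have hPx : (∏ i ∈ Finset.range N, ((1:ℂ) - x * q ^ i)) ≠ 0 :=
    Finset.prod_ne_zero_iff.mpr (fun i _ => hPne i)
  have hPdiff : DifferentiableAt ℂ (fun y : ℂ => ∏ i ∈ Finset.range N, (1 - y * q ^ i)) x :=
    DifferentiableAt.fun_finsetProd (fun i _ => (hfacD i x).differentiableAt)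
  have hld := logDeriv_prod (s := Finset.range N) (f := fun (i : ℕ) (y : ℂ) => 1 - y * q ^ i) (x := x)
    (fun i _ => hPne i) (fun i _ => (hfacD i x).differentiableAt)
  have hterm : ∀ i ∈ Finset.range N,
      logDeriv (fun y : ℂ => 1 - y * q ^ i) x = -(q ^ i / (1 - x * q ^ i)) := by
    intro i _
    rw [logDeriv_apply, (hfacD i x).deriv, neg_div]
  rw [Finset.sum_congr rfl hterm, logDeriv_apply] at hld
  have hPder : HasDerivAt (fun y : ℂ => ∏ i ∈ Finset.range N, (1 - y * q ^ i))
      ((∏ i ∈ Finset.range N, ((1:ℂ) - x * q ^ i))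
        * ∑ i ∈ Finset.range N, -(q ^ i / (1 - x * q ^ i))) x := by
    have h2 := hPdiff.hasDerivAt
    have h3 : deriv (fun y : ℂ => ∏ i ∈ Finset.range N, (1 - y * q ^ i)) x
        = (∏ i ∈ Finset.range N, ((1:ℂ) - x * q ^ i))
          * ∑ i ∈ Finset.range N, -(q ^ i / (1 - x * q ^ i)) := by
      rw [div_eq_iff hPx] at hld
      rw [hld]; ring
    rwa [h3] at h2
  -- combine
  have hPT := hPder.mul hT
  have hEq : (fun y : ℂ => ∏' n : ℕ, (1 - y * q ^ n)) =ᶠ[nhds x]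
      fun y : ℂ => (∏ i ∈ Finset.range N, (1 - y * q ^ i))
        * ∏' n : ℕ, (1 - y * q ^ (n + N)) := by
    filter_upwards [Metric.isOpen_ball.mem_nhds hxU] with y hy
    exact hsplit y hy
  have final := hPT.congr_of_eventuallyEq hEq
  have hval : (∏' n : ℕ, (1 - x * q ^ n)) * (-∑' n : ℕ, q ^ n / (1 - x * q ^ n))
      = (∏ i ∈ Finset.range N, ((1:ℂ) - x * q ^ i))
          * (∑ i ∈ Finset.range N, -(q ^ i / (1 - x * q ^ i)))
          * (∏' n : ℕ, (1 - x * q ^ (n + N)))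
        + (∏ i ∈ Finset.range N, ((1:ℂ) - x * q ^ i))
          * (Complex.exp (∑' n : ℕ, Complex.log (1 - x * q ^ (n + N)))
            * deriv (fun w : ℂ => ∑' n : ℕ, Complex.log (1 - w * q ^ (n + N))) x) := by
    rw [hsplit x hxU, hDg, ← hTexp x hxU, ← Summable.sum_add_tsum_nat_add (f := fun m : ℕ => q ^ m / (1 - x * q ^ m)) N hS,
      Finset.sum_neg_distrib]
    ring
  rw [hval]
  exact final
end

section
/- Let q = e^{2πiτ} with Im τ > 0 and x ∈ 𝔼 arbitrary nonzero complex. Define θ(q,x) = (q;q)_∞ · (-√q x; q)_∞ · (-√q/x; q)_∞ where (a;q)_∞ = Π_{n≥0}(1 - a q^n) and √q = e^{πiτ}. Then θ(q,x) = Σ_{n∈ℤ} q^{n²/2} x^n, where q^{n²/2} = e^{πiτn²}. -/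
open Real Complex

open Finset Filter Topology

namespace JTP
variable (q : ℂ)

noncomputable def D (k : ℕ) : ℂ := ∏ i ∈ range k, (1 - q ^ (i + 1))

noncomputable def N (m : ℤ) (k : ℕ) : ℂ := ∏ i ∈ range k, (1 - q ^ (m - i))

lemma D_succ (k : ℕ) : D q (k + 1) = D q k * (1 - q ^ (k + 1)) := prod_range_succ _ _

lemma N_succ (m : ℤ) (k : ℕ) : N q m (k + 1) = N q m k * (1 - q ^ (m - k)) :=
  prod_range_succ _ _

lemma N_succ_left (m : ℤ) (k : ℕ) :
    N q (m + 1) (k + 1) = (1 - q ^ (m + 1)) * N q m k := by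
  rw [N, prod_range_succ', N, mul_comm]
  congr 1
  · norm_num
  · exact prod_congr rfl fun i _ => by push_cast; ring_nf

lemma one_sub_pow_ne (hq : ‖q‖ < 1) (k : ℕ) : (1 : ℂ) - q ^ (k + 1) ≠ 0 := by
  intro h
  have h1 : q ^ (k + 1) = 1 := by linear_combination -h
  have : ‖q ^ (k + 1)‖ < 1 := by
    rw [norm_pow]; exact pow_lt_one₀ (norm_nonneg q) hq (Nat.succ_ne_zero k)
  rw [h1, norm_one] at this; exact lt_irrefl _ this

lemma D_ne_zero (hq : ‖q‖ < 1) (k : ℕ) : D q k ≠ 0 :=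
  prod_ne_zero_iff.2 fun i _ => one_sub_pow_ne q hq i

lemma N_self_zero (m : ℕ) : N q m (m + 1) = 0 := by
  apply prod_eq_zero (show m ∈ range (m+1) by simp)
  simp

/-- q-binomial theorem in the form we need. -/
lemma qbinom (hq0 : q ≠ 0) (hq : ‖q‖ < 1) (m : ℕ) (t : ℂ) :
    ∏ i ∈ range m, (1 + t * q ^ i) =
      ∑ k ∈ range (m + 1), q ^ (k.choose 2) * N q m k / D q k * t ^ k := by
  induction m with
  | zero => simp [N, D]
  | succ m ih =>
      have hDne := D_ne_zero q hq
      have key : ∀ k ∈ range (m + 1),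
          q ^ ((k+1).choose 2) * N q ((m:ℤ)+1) (k+1) / D q (k+1) * t ^ (k+1)
            = q ^ ((k+1).choose 2) * N q m (k+1) / D q (k+1) * t ^ (k+1)
              + (q ^ (k.choose 2) * N q m k / D q k * t ^ k) * (t * q ^ m) := by
        intro k _
        have hu := one_sub_pow_ne q hq k
        have hch : (k+1).choose 2 = k.choose 2 + k := by
          rw [Nat.choose_succ_succ, Nat.choose_one_right, Nat.add_comm]
        have e1 : q ^ ((m:ℤ) - k) * q ^ k = q ^ m := by
          rw [← zpow_natCast q k, ← zpow_natCast q m, ← zpow_add₀ hq0]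
          congr 1; omega
        have e2 : q ^ ((m:ℤ) + 1) = q * q ^ m := by
          rw [zpow_add₀ hq0, zpow_one, zpow_natCast]; ring
        have hd' : D q k * (D q k)⁻¹ = 1 := mul_inv_cancel₀ (hDne k)
        have hu' : (1 - q ^ (k+1)) * (1 - q ^ (k+1))⁻¹ = 1 := mul_inv_cancel₀ hu
        rw [N_succ_left, N_succ, D_succ, hch]
        simp only [div_eq_mul_inv, mul_inv]
        linear_combination (q ^ (k.choose 2) * N q (m:ℤ) k * (D q k)⁻¹ * ((1 - q ^ (k+1)))⁻¹ * t^(k+1)) * e1 + (q ^ (k.choose 2) * N q (m:ℤ) k * q^m * (D q k)⁻¹ * t^(k+1)) * hu' - (q ^ (k.choose 2) * q ^ k * N q (m:ℤ) k * (D q k)⁻¹ * ((1 - q ^ (k+1)))⁻¹ * t^(k+1)) * e2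
      have push : (m:ℤ) + 1 = ((m+1 : ℕ) : ℤ) := by push_cast; ring
      calc ∏ i ∈ range (m+1), (1 + t * q ^ i)
          = (∑ k ∈ range (m + 1), q ^ k.choose 2 * N q m k / D q k * t ^ k)
            + (∑ k ∈ range (m + 1), q ^ k.choose 2 * N q m k / D q k * t ^ k) * (t * q ^ m) := by
            rw [prod_range_succ, ih]; ring
        _ = (∑ k ∈ range (m + 2), q ^ k.choose 2 * N q m k / D q k * t ^ k)
            + ∑ k ∈ range (m + 1), (q ^ k.choose 2 * N q m k / D q k * t ^ k) * (t * q ^ m) := by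
            rw [sum_range_succ _ (m+1), N_self_zero]
            rw [Finset.sum_mul]
            simp
        _ = ∑ k ∈ range (m + 1 + 1), q ^ k.choose 2 * N q (m+1 : ℕ) k / D q k * t ^ k := by
            rw [sum_range_succ' (fun k => q ^ k.choose 2 * N q (m+1:ℕ) k / D q k * t ^ k) (m+1),
              sum_range_succ' (fun k => q ^ k.choose 2 * N q (m:ℕ) k / D q k * t ^ k) (m+1)]
            rw [← push, add_assoc, add_comm _ (∑ k ∈ range (m + 1), (q ^ k.choose 2 * N q (m:ℤ) k / D q k * t ^ k) * (t * q ^ m)), ← add_assoc, ← Finset.sum_add_distrib]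
            congr 1
            refine sum_congr rfl fun k hk => ?_
            exact (key k hk).symm

end JTP

namespace JTP2
open JTP

lemma choose_step (k : ℕ) : (k+1).choose 2 = k.choose 2 + k := by
  rw [Nat.choose_succ_succ, Nat.choose_one_right, Nat.add_comm]

lemma two_choose_two (m : ℕ) : (2 * (m.choose 2) : ℤ) = m^2 - m := by
  induction m with
  | zero => simp
  | succ m ih => rw [choose_step]; push_cast; linear_combination ih

lemma prod_const_mul_pow (c q : ℂ) (m : ℕ) :
    ∏ n ∈ range m, (c * q ^ n) = c ^ m * q ^ (m.choose 2) := by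
  induction m with
  | zero => simp
  | succ m ih => rw [prod_range_succ, ih, choose_step]; ring

variable {s x : ℂ}

lemma term_eq (hs0 : s ≠ 0) (hx : x ≠ 0) (m k : ℕ) :
    (s/x)^m * (s^2)^(m.choose 2) * ((s^2) ^ (k.choose 2) * ((s*x) * ((s^2) ^ (-(m:ℤ)))) ^ k)
      = s ^ (((k:ℤ) - m)^2) * x ^ ((k:ℤ) - m) := by
  have e1 : (s/x)^m = s ^ (m:ℤ) * x ^ (-(m:ℤ)) := by
    rw [div_pow, div_eq_mul_inv, ← zpow_natCast s, ← zpow_natCast x, ← zpow_neg]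
  have e2 : ∀ c : ℕ, (s^2)^c = s ^ ((2*c : ℕ) : ℤ) := by
    intro c; rw [← pow_mul, ← zpow_natCast s]
  have e4 : ((s*x) * ((s^2) ^ (-(m:ℤ)))) ^ k
      = s ^ ((k:ℤ) + 2*(-(m:ℤ))*(k:ℤ)) * x ^ (k:ℤ) := by
    rw [mul_pow, mul_pow, ← zpow_natCast ((s^2) ^ (-(m:ℤ))) k, ← zpow_mul,
      ← zpow_natCast s k, ← zpow_natCast x k, ← zpow_natCast s 2, ← zpow_mul]
    push_cast
    rw [zpow_add₀ hs0]
    ring_nf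
  have assemble : ∀ (a b c d e f : ℤ), s ^ a * x ^ b * s ^ c * (s ^ d * (s ^ e * x ^ f))
      = s ^ (a+c+d+e) * x ^ (b+f) := by
    intro a b c d e f
    simp only [zpow_add₀ hs0, zpow_add₀ hx]; ring
  rw [e1, e2, e2, e4, assemble]
  have h2m := two_choose_two m
  have h2k := two_choose_two k
  congr 1
  · congr 1
    push_cast at h2m h2k ⊢
    linear_combination h2m + h2k
  · congr 1
    push_cast; ring

lemma third_factor (hs0 : s ≠ 0) (hx : x ≠ 0) (n : ℕ) :
    (1 + s/x * (s^2)^n) = (s/x * (s^2)^n) * (1 + (s*x) * (s^2)^(-(n:ℤ)-1)) := by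
  have hq0 : (s^2 : ℂ) ≠ 0 := pow_ne_zero _ hs0
  have h1 : (s^2:ℂ) ^ ((n:ℤ)+1) * (s^2) ^ (-(n:ℤ)-1) = 1 := by
    rw [← zpow_add₀ hq0]; norm_num
  have h3 : x * x⁻¹ = 1 := mul_inv_cancel₀ hx
  have h4 : (s^2:ℂ) ^ ((n:ℤ)+1) = (s^2)^n * s^2 := by
    rw [zpow_add₀ hq0, zpow_one, zpow_natCast]
  rw [div_eq_mul_inv]
  linear_combination -h1 + h4 * ((s^2) ^ (-(n:ℤ)-1)) + ((s^2)^n * s^2 * ((s^2) ^ (-(n:ℤ)-1))) * h3 - (s^2 * s^(n*2) * ((s^2) ^ (-(n:ℤ)-1)) * 2) * h3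

lemma reindex (z q : ℂ) (hq0 : q ≠ 0) (m : ℕ) :
    (∏ n ∈ range m, (1 + z * q ^ n)) * (∏ n ∈ range m, (1 + z * q ^ (-(n:ℤ)-1)))
      = ∏ i ∈ range (2*m), (1 + (z * q ^ (-(m:ℤ))) * q ^ i) := by
  rw [two_mul, prod_range_add, mul_comm]
  congr 1
  · rw [← prod_range_reflect (fun j => 1 + z * q ^ (-(j:ℤ)-1)) m]
    refine prod_congr rfl fun j hj => ?_
    rw [mem_range] at hj
    congr 1
    rw [mul_assoc, ← zpow_natCast q j, ← zpow_add₀ hq0]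
    congr 1
    have : ((m - 1 - j : ℕ) : ℤ) = (m:ℤ) - 1 - j := by
      push_cast [Nat.cast_sub (by omega : j ≤ m - 1), Nat.cast_sub (by omega : 1 ≤ m)]; ring
    rw [this]; ring
  · refine prod_congr rfl fun j hj => ?_
    congr 1
    rw [mul_assoc, ← zpow_natCast q (m + j), ← zpow_add₀ hq0, ← zpow_natCast q j]
    congr 1
    push_cast; ring

lemma sym (hs0 : s ≠ 0) (hx : x ≠ 0) (hq : ‖(s:ℂ)^2‖ < 1) (m : ℕ) :
    (∏ n ∈ range m, (1 + s*x*(s^2)^n)) * (∏ n ∈ range m, (1 + s/x*(s^2)^n))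
      = ∑ k ∈ range (2*m+1),
          (N (s^2) (2*m) k / D (s^2) k) * (s ^ (((k:ℤ) - m)^2) * x ^ ((k:ℤ) - m)) := by
  have hq0 : (s^2 : ℂ) ≠ 0 := pow_ne_zero _ hs0
  calc (∏ n ∈ range m, (1 + s*x*(s^2)^n)) * (∏ n ∈ range m, (1 + s/x*(s^2)^n))
      = (∏ n ∈ range m, (1 + s*x*(s^2)^n)) *
        ((∏ n ∈ range m, (s/x * (s^2)^n)) * ∏ n ∈ range m, (1 + (s*x) * (s^2)^(-(n:ℤ)-1))) := by
        congr 1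
        rw [← prod_mul_distrib]
        exact prod_congr rfl fun n _ => third_factor hs0 hx n
    _ = ((s/x)^m * (s^2)^(m.choose 2)) *
        ((∏ n ∈ range m, (1 + s*x*(s^2)^n)) * ∏ n ∈ range m, (1 + (s*x) * (s^2)^(-(n:ℤ)-1))) := by
        rw [prod_const_mul_pow]; ring
    _ = ((s/x)^m * (s^2)^(m.choose 2)) *
        ∏ i ∈ range (2*m), (1 + (s*x*(s^2)^(-(m:ℤ))) * (s^2) ^ i) := by
        rw [reindex (s*x) (s^2) hq0 m]
    _ = ((s/x)^m * (s^2)^(m.choose 2)) *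
        ∑ k ∈ range (2*m+1), (s^2) ^ (k.choose 2) * N (s^2) (2*m) k / D (s^2) k
          * (s*x*(s^2)^(-(m:ℤ))) ^ k := by
        rw [qbinom (s^2) hq0 hq (2*m) (s*x*(s^2)^(-(m:ℤ)))]
        norm_cast
    _ = ∑ k ∈ range (2*m+1),
          (N (s^2) (2*m) k / D (s^2) k) * (s ^ (((k:ℤ) - m)^2) * x ^ ((k:ℤ) - m)) := by
        rw [Finset.mul_sum]
        refine sum_congr rfl fun k _ => ?_
        rw [← term_eq hs0 hx m k]
        ring

end JTP2

namespace JTP3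
open JTP JTP2

lemma hasProd_zero_of_zero {f : ℕ → ℂ} {N : ℕ} (h : f N = 0) : HasProd f 0 := by
  rw [HasProd]
  have : ∀ᶠ S : Finset ℕ in atTop, ∏ i ∈ S, f i = 0 := by
    filter_upwards [Filter.eventually_ge_atTop ({N} : Finset ℕ)] with S hS
    exact Finset.prod_eq_zero (hS (Finset.mem_singleton_self N)) h
  exact Filter.Tendsto.congr' (by filter_upwards [this] with S hS using hS.symm)
    tendsto_const_nhds

lemma multipliable_one_add {f : ℕ → ℂ} (hf : Summable f) :
    Multipliable (fun n => 1 + f n) := by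
  by_cases hne : ∀ n, 1 + f n ≠ 0
  · have hlog : Summable fun n => Complex.log (1 + f n) := by
      have := hf.neg.clog_one_sub
      simpa [sub_neg_eq_add] using this
    exact Complex.multipliable_of_summable_log hlog
  · push_neg at hne
    obtain ⟨N, hN⟩ := hne
    exact ⟨0, hasProd_zero_of_zero hN⟩

lemma tprod_one_add_ne_zero {f : ℕ → ℂ} (hf : Summable f) (hne : ∀ n, 1 + f n ≠ 0) :
    (∏' n, (1 + f n)) ≠ 0 := by
  have hlog : Summable fun n => Complex.log (1 + f n) := by
    have := hf.neg.clog_one_sub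
    simpa [sub_neg_eq_add] using this
  have : Complex.exp (∑' n, Complex.log (1 + f n)) = ∏' n, (1 + f n) :=
    Complex.cexp_tsum_eq_tprod (f := fun n => 1 + f n) hne hlog
  rw [← this]
  exact Complex.exp_ne_zero _

lemma summable_geom_shift {q : ℂ} (hq : ‖q‖ < 1) : Summable (fun n : ℕ => q ^ (n+1)) := by
  have := (summable_geometric_of_norm_lt_one hq).mul_left q
  refine this.congr fun n => ?_
  rw [pow_succ]; ring

lemma summable_const_mul_geom (c : ℂ) {q : ℂ} (hq : ‖q‖ < 1) :
    Summable (fun n : ℕ => c * q ^ n) :=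
  (summable_geometric_of_norm_lt_one hq).mul_left c

lemma exists_pos_le_norm {f : ℕ → ℂ} {L : ℂ} (hf : Filter.Tendsto f atTop (𝓝 L))
    (hL : L ≠ 0) (h0 : ∀ k, f k ≠ 0) : ∃ ε > 0, ∀ k, ε ≤ ‖f k‖ := by
  have hLpos : 0 < ‖L‖ := norm_pos_iff.2 hL
  have hev : ∀ᶠ k in atTop, ‖L‖ / 2 < ‖f k‖ :=
    hf.norm.eventually_const_lt (by linarith)
  obtain ⟨M, hM⟩ := hev.exists_forall_of_atTop
  classical
  set ε₀ : ℝ := (Finset.range (M + 1)).inf' (by simp) (fun k => ‖f k‖) with hε₀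
  have hε₀pos : 0 < ε₀ := by
    rw [hε₀]
    apply (Finset.lt_inf'_iff _).2
    intro k _
    exact norm_pos_iff.2 (h0 k)
  refine ⟨min ε₀ (‖L‖ / 2), lt_min hε₀pos (by linarith), fun k => ?_⟩
  rcases le_or_gt k M with hk | hk
  · exact le_trans (min_le_left _ _)
      (Finset.inf'_le _ (Finset.mem_range.2 (by omega)))
  · exact le_trans (min_le_right _ _) (hM k (by omega)).le

lemma summable_aux_nat {s : ℂ} (hs : ‖s‖ < 1) (y : ℂ) :
    Summable (fun n : ℕ => ‖s‖ ^ (n^2) * ‖y‖ ^ n) := by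
  have h0 : (0:ℝ) ≤ ‖s‖ := norm_nonneg s
  have htend : Filter.Tendsto (fun n : ℕ => ‖s‖ ^ n * ‖y‖) atTop (𝓝 0) := by
    simpa using (tendsto_pow_atTop_nhds_zero_of_lt_one h0 hs).mul_const ‖y‖
  have hev : ∀ᶠ n : ℕ in atTop, ‖s‖ ^ n * ‖y‖ ≤ 1/2 :=
    htend.eventually_le_const (by norm_num)
  refine summable_of_ratio_norm_eventually_le (r := 1/2) (by norm_num) ?_
  filter_upwards [hev] with n hn
  have e1 : ‖s‖ ^ ((n+1)^2) * ‖y‖ ^ (n+1)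
      = (‖s‖ ^ (n^2) * ‖y‖ ^ n) * (‖s‖ ^ (2*n+1) * ‖y‖) := by
    rw [show (n+1)^2 = n^2 + (2*n+1) by ring, pow_add, pow_succ]
    ring
  have e2 : ‖s‖ ^ (2*n+1) * ‖y‖ ≤ ‖s‖ ^ n * ‖y‖ :=
    mul_le_mul_of_nonneg_right (pow_le_pow_of_le_one h0 hs.le (by omega)) (norm_nonneg y)
  have hb : (0:ℝ) ≤ ‖s‖ ^ (n^2) * ‖y‖ ^ n := by positivity
  rw [Real.norm_of_nonneg (by positivity), Real.norm_of_nonneg (by positivity), e1]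
  calc (‖s‖ ^ (n^2) * ‖y‖ ^ n) * (‖s‖ ^ (2*n+1) * ‖y‖)
      ≤ (‖s‖ ^ (n^2) * ‖y‖ ^ n) * (1/2) := by
        refine mul_le_mul_of_nonneg_left (le_trans e2 hn) hb
    _ = 1/2 * (‖s‖ ^ (n^2) * ‖y‖ ^ n) := by ring

lemma summable_g {s x : ℂ} (hs : ‖s‖ < 1) (hs0 : s ≠ 0) (hx : x ≠ 0) :
    Summable (fun j : ℤ => ‖s ^ (j^2) * x ^ j‖) := by
  have key : ∀ (y : ℂ), y ≠ 0 → Summable (fun n : ℕ => ‖s ^ (((n:ℤ))^2) * y ^ ((n:ℤ))‖) := by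
    intro y hy
    refine (summable_aux_nat hs y).congr fun n => ?_
    rw [norm_mul, show ((n:ℤ))^2 = ((n^2:ℕ):ℤ) from by push_cast; ring,
      zpow_natCast, zpow_natCast, norm_pow, norm_pow]
  apply Summable.of_nat_of_neg
  · exact key x hx
  · refine (key x⁻¹ (inv_ne_zero hx)).congr fun n => ?_
    rw [neg_sq, zpow_neg, ← inv_zpow]

lemma N_div {q : ℂ} (hq : ‖q‖ < 1) (m k : ℕ) (hk : k ≤ m) :
    N q (m:ℤ) k = D q m / D q (m - k) := by
  have hsplit : D q m = D q (m - k) * ∏ i ∈ range k, (1 - q ^ ((m - k) + i + 1)) := by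
    rw [D, D, ← prod_range_add (fun i => 1 - q ^ (i+1)) (m-k) k, Nat.sub_add_cancel hk]
  have h2 : N q (m:ℤ) k = ∏ i ∈ range k, (1 - q ^ ((m - k) + i + 1)) := by
    rw [N, ← prod_range_reflect (fun j => 1 - q ^ ((m:ℤ) - j)) k]
    refine prod_congr rfl fun j hj => ?_
    rw [mem_range] at hj
    rw [← zpow_natCast q (m - k + j + 1)]
    congr 2
    omega
  rw [h2, hsplit, mul_div_cancel_left₀ _ (D_ne_zero q hq (m-k))]

lemma toNat_tendsto (j : ℤ) :
    Filter.Tendsto (fun m : ℕ => ((m:ℤ) + j).toNat) atTop atTop :=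
  Filter.tendsto_atTop_atTop.2 fun b => ⟨b + j.natAbs, fun a ha => by omega⟩

lemma key (s x : ℂ) (hs : ‖s‖ < 1) (hs0 : s ≠ 0) (hx : x ≠ 0) :
    (∏' n : ℕ, (1 - (s^2) ^ (n+1))) * (∏' n : ℕ, (1 + s*x*(s^2)^n)) *
      (∏' n : ℕ, (1 + s/x*(s^2)^n))
      = ∑' j : ℤ, s ^ (j^2) * x ^ j := by
  have hq : ‖(s^2 : ℂ)‖ < 1 := by
    rw [norm_pow]; exact pow_lt_one₀ (norm_nonneg s) hs two_ne_zero
  have hq0 : (s^2:ℂ) ≠ 0 := pow_ne_zero _ hs0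
  set q : ℂ := s^2 with hqdef
  have m1 : Multipliable (fun n : ℕ => 1 - q^(n+1)) := by
    have := multipliable_one_add (f := fun n => -(q^(n+1))) (summable_geom_shift hq).neg
    refine this.congr fun n => by ring
  have m2 : Multipliable (fun n : ℕ => 1 + s*x*q^n) :=
    multipliable_one_add (summable_const_mul_geom (s*x) hq)
  have m3 : Multipliable (fun n : ℕ => 1 + s/x*q^n) :=
    multipliable_one_add (summable_const_mul_geom (s/x) hq)
  set P1 : ℂ := ∏' n : ℕ, (1 - q^(n+1)) with hP1
  set P2 : ℂ := ∏' n : ℕ, (1 + s*x*q^n) with hP2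
  set P3 : ℂ := ∏' n : ℕ, (1 + s/x*q^n) with hP3
  have hDlim : Filter.Tendsto (fun k => D q k) atTop (𝓝 P1) := m1.hasProd.tendsto_prod_nat
  have hP1ne : P1 ≠ 0 := by
    have h := tprod_one_add_ne_zero (f := fun n => -(q^(n+1))) (summable_geom_shift hq).neg
      (fun n => by
        have := one_sub_pow_ne q hq n
        intro hcon; apply this; rw [← hcon]; ring)
    rw [hP1]
    intro hcon; apply h; rw [← hcon]
    exact tprod_congr fun n => by ring
  obtain ⟨ε, hε, hεle⟩ := exists_pos_le_norm hDlim hP1ne (D_ne_zero q hq)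
  obtain ⟨C, hC⟩ : ∃ C : ℝ, ∀ k, ‖D q k‖ ≤ C := by
    obtain ⟨C, hC⟩ := hDlim.norm.bddAbove_range
    exact ⟨C, fun k => hC ⟨k, rfl⟩⟩
  have hg : Summable (fun j : ℤ => ‖s ^ (j^2) * x ^ j‖) := summable_g hs hs0 hx
  set c : ℕ → ℤ → ℂ := fun m j =>
    P1 * D q (2*m) / (D q ((m:ℤ) + j).toNat * D q ((m:ℤ) - j).toNat) with hc
  set F : ℕ → ℤ → ℂ := fun m j =>
    if j.natAbs ≤ m then c m j * (s ^ (j^2) * x ^ j) else 0 with hF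
  have sum_eq : ∀ m : ℕ, (∑' j : ℤ, F m j)
      = P1 * ((∏ n ∈ range m, (1 + s*x*q^n)) * (∏ n ∈ range m, (1 + s/x*q^n))) := by
    intro m
    rw [tsum_eq_sum (s := Finset.Icc (-(m:ℤ)) (m:ℤ)) (f := F m) (fun j hj => by
      rw [Finset.mem_Icc] at hj
      simp only [hF]
      exact if_neg (by omega))]
    rw [sym hs0 hx hq m, Finset.mul_sum]
    refine Finset.sum_bij' (i := fun j _ => ((m:ℤ) + j).toNat)
      (j := fun k _ => (k:ℤ) - m) ?_ ?_ ?_ ?_ ?_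
    · intro a ha
      rw [Finset.mem_Icc] at ha
      simp only [mem_range]
      omega
    · intro a ha
      rw [mem_range] at ha
      simp only [Finset.mem_Icc]
      omega
    · intro a ha
      rw [Finset.mem_Icc] at ha
      show ((((m:ℤ) + a).toNat : ℤ) - m) = a
      omega
    · intro a ha
      rw [mem_range] at ha
      show ((m:ℤ) + ((a:ℤ) - m)).toNat = a
      omega
    · intro j hj
      rw [Finset.mem_Icc] at hj
      set k : ℕ := ((m:ℤ) + j).toNat with hk
      have hk1 : k ≤ 2*m := by omega
      have hk2 : 2*m - k = ((m:ℤ) - j).toNat := by omega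
      have hk3 : (k:ℤ) - m = j := by omega
      simp only [hF]
      rw [if_pos (by omega : j.natAbs ≤ m), hk3]
      rw [show (2 * (m:ℤ)) = ((2*m : ℕ) : ℤ) from by push_cast; ring]
      rw [N_div hq (2*m) k hk1, hk2, hc]
      rw [div_div]
      ring
  have lim1 : Filter.Tendsto (fun m => ∑' j : ℤ, F m j) atTop (𝓝 (P1 * (P2 * P3))) := by
    simp only [sum_eq]
    exact tendsto_const_nhds.mul
      ((m2.hasProd.tendsto_prod_nat).mul (m3.hasProd.tendsto_prod_nat))
  have lim2 : Filter.Tendsto (fun m => ∑' j : ℤ, F m j) atTop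
      (𝓝 (∑' j : ℤ, s ^ (j^2) * x ^ j)) := by
    refine tendsto_tsum_of_dominated_convergence
      (bound := fun j => (‖P1‖ * C / (ε*ε)) * ‖s ^ (j^2) * x ^ j‖) (hg.mul_left _) ?_ ?_
    · intro j
      have h1 : Filter.Tendsto (fun m : ℕ => D q (2*m)) atTop (𝓝 P1) :=
        hDlim.comp (Filter.tendsto_atTop_atTop.2 fun b => ⟨b, fun a ha => by omega⟩)
      have h2 : Filter.Tendsto (fun m : ℕ => D q ((m:ℤ) + j).toNat) atTop (𝓝 P1) :=
        hDlim.comp ((toNat_tendsto j).congr fun m => by rw [add_comm])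
      have h3 : Filter.Tendsto (fun m : ℕ => D q ((m:ℤ) - j).toNat) atTop (𝓝 P1) :=
        hDlim.comp ((toNat_tendsto (-j)).congr fun m => by rw [sub_eq_add_neg])
      have hco : Filter.Tendsto (fun m => c m j) atTop (𝓝 1) := by
        have hv : P1 * P1 / (P1 * P1) = 1 := div_self (mul_ne_zero hP1ne hP1ne)
        rw [← hv]
        exact (tendsto_const_nhds.mul h1).div (h2.mul h3) (mul_ne_zero hP1ne hP1ne)
      have hev : ∀ᶠ m : ℕ in atTop, c m j * (s ^ (j^2) * x ^ j) = F m j := by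
        filter_upwards [Filter.eventually_ge_atTop j.natAbs] with m hm
        simp only [hF]
        rw [if_pos hm]
      refine Filter.Tendsto.congr' hev ?_
      have := hco.mul_const (s ^ (j^2) * x ^ j)
      rwa [one_mul] at this
    · filter_upwards with m j
      show ‖F m j‖ ≤ _
      simp only [hF]
      by_cases hj : j.natAbs ≤ m
      · rw [if_pos hj, norm_mul]
        refine mul_le_mul_of_nonneg_right ?_ (norm_nonneg _)
        rw [hc, norm_div, norm_mul, norm_mul]
        have hC0 : (0:ℝ) ≤ C := le_trans (norm_nonneg _) (hC 0)
        refine div_le_div₀ (mul_nonneg (norm_nonneg _) hC0) ?_ (mul_pos hε hε) ?_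
        · exact mul_le_mul_of_nonneg_left (hC _) (norm_nonneg _)
        · exact mul_le_mul (hεle _) (hεle _) hε.le (norm_nonneg _)
      · rw [if_neg hj, norm_zero]
        have hC0 : (0:ℝ) ≤ C := le_trans (norm_nonneg _) (hC 0)
        exact mul_nonneg (div_nonneg (mul_nonneg (norm_nonneg _) hC0)
          (mul_pos hε hε).le) (norm_nonneg _)
  rw [mul_assoc]
  exact tendsto_nhds_unique lim1 lim2

end JTP3

open Real Complex

theorem stmt_15 (τ : ℂ) (hτ : 0 < τ.im) (x : ℂ) (hx : x ≠ 0) :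
    (∏' n : ℕ, (1 - Complex.exp (2 * π * I * τ) ^ (n + 1))) *
      (∏' n : ℕ, (1 + Complex.exp (π * I * τ) * x * Complex.exp (2 * π * I * τ) ^ n)) *
      (∏' n : ℕ, (1 + Complex.exp (π * I * τ) / x * Complex.exp (2 * π * I * τ) ^ n)) =
      ∑' n : ℤ, Complex.exp (π * I * τ * (n : ℂ) ^ 2) * x ^ n := by
  have hre : (↑π * I * τ).re = -(π * τ.im) := by
    simp [Complex.mul_re, Complex.mul_im]
  have hs : ‖Complex.exp (π * I * τ)‖ < 1 := by
    rw [Complex.norm_exp, hre, Real.exp_lt_one_iff]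
    nlinarith [Real.pi_pos]
  have hs0 : Complex.exp (π * I * τ) ≠ 0 := Complex.exp_ne_zero _
  have hs2 : Complex.exp (π * I * τ) ^ 2 = Complex.exp (2 * π * I * τ) := by
    rw [← Complex.exp_nat_mul]
    congr 1
    push_cast
    ring
  have h := JTP3.key (Complex.exp (π * I * τ)) x hs hs0 hx
  rw [hs2] at h
  rw [h]
  refine tsum_congr fun n => ?_
  congr 1
  have e : (↑π * I * τ * (n:ℂ)^2) = ((n^2 : ℤ):ℂ) * (↑π * I * τ) := by push_cast; ring
  rw [e, Complex.exp_int_mul]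
end
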